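/- arXiv:2410.16548 — 7 statements merged into one kernel-verified Lean document; each statement's English description precedes it below -/
import Mathlib

section
/- Fix n ≥ 2 and k_1,…,k_n ≥ 1 with K = Σ_{i=1}^n k_i, and for U = (U^{(ij)})_{1≤i<j≤n} ∈ ∏_{i<j} ℝ^{k_i×k_j}, let A(U) ∈ ℝ^{K×K} be the block matrix with (i,j) block U^{(ij)} for i < j, (j,i) block (U^{(ij)})ᵀ for i < j, and zero diagonal blocks (the consolidated payoff matrix of a coordination polymatrix game). Then the set {U : A(U) is not invertible} has Lebesgue measure zero in the parameter space ∏_{i<j} ℝ^{k_i×k_j} if and only if k_i ≤ K/2 for all i ∈ {1,…,n}. Moreover, if k_i > K/2 for some i, then A(U) is singular for every U, so no coordination polymatrix game with these dimensions has a unique Nash equilibrium. -/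
open Matrix MeasureTheory

/-- The parameter space of coordination polymatrix games: one matrix
`U⁽ⁱʲ⁾ ∈ ℝ^{kᵢ × kⱼ}` for each pair `i < j`. -/
abbrev CoordParam (n : ℕ) (k : Fin n → ℕ) : Type :=
  (p : {p : Fin n × Fin n // p.1 < p.2}) → Fin (k p.1.1) → Fin (k p.1.2) → ℝ

/-- The consolidated payoff matrix of the coordination polymatrix game with parameters
`U`: the `(i,j)` block is `U⁽ⁱʲ⁾` for `i < j`, the `(j,i)` block is `(U⁽ⁱʲ⁾)ᵀ` for
`i < j`, and the diagonal blocks are zero. -/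
def coordMatrix {n : ℕ} (k : Fin n → ℕ) (U : CoordParam n k) :
    Matrix ((i : Fin n) × Fin (k i)) ((i : Fin n) × Fin (k i)) ℝ :=
  fun p q =>
    if h : p.1 < q.1 then U ⟨(p.1, q.1), h⟩ p.2 q.2
    else if h' : q.1 < p.1 then U ⟨(q.1, p.1), h'⟩ q.2 p.2
    else 0

open MvPolynomial


lemma aux_null_fin : ∀ (d : ℕ) (f : MvPolynomial (Fin d) ℝ), f ≠ 0 →
    volume {x : Fin d → ℝ | eval x f = 0} = 0 := by
  intro d
  induction d with
  | zero =>
    intro f hf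
    have h1 : ¬ ∀ x : Fin 0 → ℝ, eval x f = 0 := fun h =>
      hf (MvPolynomial.funext fun x => by simpa using h x)
    push_neg at h1
    obtain ⟨x₀, hx₀⟩ := h1
    have he : {x : Fin 0 → ℝ | eval x f = 0} = ∅ := by
      ext x
      simp only [Set.mem_setOf_eq, Set.mem_empty_iff_false, iff_false]
      rwa [Subsingleton.elim x x₀]
    simp [he]
  | succ d ih =>
    intro f hf
    set g := finSuccEquiv ℝ d f with hgdef
    have hg : g ≠ 0 := by
      simp only [hgdef, ne_eq, EmbeddingLike.map_eq_zero_iff]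
      exact hf
    obtain ⟨j₀, hj₀⟩ : ∃ j, g.coeff j ≠ 0 := by
      by_contra h
      push_neg at h
      exact hg (Polynomial.ext fun j => by simp [h j])
    set B : Set (Fin d → ℝ) := {y | eval y (g.coeff j₀) = 0} with hBdef
    have hB : volume B = 0 := ih _ hj₀
    have hBm : MeasurableSet B :=
      (isClosed_eq (MvPolynomial.continuous_eval _) continuous_const).measurableSet
    set Z : Set (Fin (d + 1) → ℝ) := {x | eval x f = 0} with hZdef
    have hZm : MeasurableSet Z :=
      (isClosed_eq (MvPolynomial.continuous_eval _) continuous_const).measurableSet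
    set e := MeasurableEquiv.piFinSuccAbove (fun _ : Fin (d + 1) => ℝ) 0 with hedef
    have mp := MeasureTheory.volume_preserving_piFinSuccAbove (fun _ : Fin (d + 1) => ℝ) 0
    have hsymm : ∀ (t : ℝ) (y : Fin d → ℝ), e.symm (t, y) = Fin.cons t y := by
      intro t y
      simp [hedef, MeasurableEquiv.piFinSuccAbove, Fin.insertNth_zero]
      rfl
    set T : Set (ℝ × (Fin d → ℝ)) := e.symm ⁻¹' Z with hTdef
    have hTm : MeasurableSet T := e.symm.measurable hZm
    have hZT : Z = e ⁻¹' T := by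
      simp [hTdef, Set.preimage_preimage]
    have hvolT : volume Z = (volume : Measure (ℝ × (Fin d → ℝ))) T := by
      rw [hZT]
      exact mp.measure_preimage hTm.nullMeasurableSet
    -- membership description of T
    have hmemT : ∀ (t : ℝ) (y : Fin d → ℝ),
        ((t, y) ∈ T ↔ Polynomial.eval t (Polynomial.map (eval y) g) = 0) := by
      intro t y
      simp only [hTdef, Set.mem_preimage, hsymm, hZdef, Set.mem_setOf_eq]
      rw [eval_eq_eval_mv_eval']
    -- split T
    have hsub : T ⊆ (Set.univ ×ˢ B) ∪ (T ∩ Set.univ ×ˢ Bᶜ) := by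
      intro p hp
      by_cases hb : p.2 ∈ B
      · exact Or.inl ⟨trivial, hb⟩
      · exact Or.inr ⟨hp, trivial, hb⟩
    have h1 : (volume : Measure (ℝ × (Fin d → ℝ))) (Set.univ ×ˢ B) = 0 := by
      rw [show (volume : Measure (ℝ × (Fin d → ℝ))) = (volume : Measure ℝ).prod volume from rfl,
        Measure.prod_prod, hB, mul_zero]
    have h2 : (volume : Measure (ℝ × (Fin d → ℝ))) (T ∩ Set.univ ×ˢ Bᶜ) = 0 := by
      set T' := T ∩ Set.univ ×ˢ Bᶜ with hT'def
      have hT'm : MeasurableSet T' := hTm.inter (MeasurableSet.univ.prod hBm.compl)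
      have hswapm : MeasurableSet (Prod.swap ⁻¹' T' : Set ((Fin d → ℝ) × ℝ)) :=
        measurable_swap hT'm
      have : (volume : Measure (ℝ × (Fin d → ℝ))) T'
          = ((volume : Measure (Fin d → ℝ)).prod volume) (Prod.swap ⁻¹' T') := by
        rw [show (volume : Measure (ℝ × (Fin d → ℝ))) = (volume : Measure ℝ).prod volume from rfl,
          ← Measure.prod_swap, Measure.map_apply measurable_swap hT'm]
      rw [this, Measure.measure_prod_null hswapm]
      refine Filter.Eventually.of_forall fun y => ?_
      by_cases hy : y ∈ B
      · convert measure_empty (μ := (volume : Measure ℝ))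
        · ext t
          simp only [Set.mem_preimage, Prod.swap_prod_mk, hT'def, Set.mem_inter_iff,
            Set.mem_prod, Set.mem_univ, true_and, Set.mem_compl_iff,
            Set.mem_empty_iff_false, iff_false, not_and, Set.mem_setOf_eq]
          intro _ h
          exact absurd hy h
        · rfl
      · have hpy : Polynomial.map (eval y) g ≠ 0 := by
          intro h
          apply hy
          simp only [hBdef, Set.mem_setOf_eq]
          have := congrArg (fun p => Polynomial.coeff p j₀) h
          simpa [Polynomial.coeff_map] using this
        have hfin : {t : ℝ | Polynomial.eval t (Polynomial.map (eval y) g) = 0}.Finite :=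
          Polynomial.finite_setOf_isRoot hpy
        refine measure_mono_null ?_ (hfin.measure_zero volume)
        intro t ht
        simp only [Set.mem_preimage, Prod.swap_prod_mk, hT'def, Set.mem_inter_iff] at ht
        exact (hmemT t y).mp ht.1
    rw [hvolT]
    exact le_antisymm (le_trans (measure_mono hsub) (le_trans (measure_union_le _ _)
      (by rw [h1, h2]; simp))) (zero_le)

lemma aux_null {σ : Type*} [Fintype σ] (f : MvPolynomial σ ℝ) (hf : f ≠ 0) :
    volume {x : σ → ℝ | eval x f = 0} = 0 := by
  set e := Fintype.equivFin σ with hedef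
  set g := rename e f with hgdef
  have hg : g ≠ 0 := by
    intro h
    exact hf (MvPolynomial.rename_injective e e.injective (by simpa [hgdef] using h))
  have h0 := aux_null_fin _ g hg
  set E := MeasurableEquiv.piCongrLeft (fun _ : Fin (Fintype.card σ) => ℝ) e with hEdef
  have mp := MeasureTheory.volume_measurePreserving_piCongrLeft
    (fun _ : Fin (Fintype.card σ) => ℝ) e
  have key : {x : σ → ℝ | eval x f = 0} = E ⁻¹' {z | eval z g = 0} := by
    ext x
    simp only [Set.mem_setOf_eq, Set.mem_preimage, hgdef, eval_rename]
    have : (E x) ∘ e = x := by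
      funext s
      simp [hEdef, MeasurableEquiv.piCongrLeft, Equiv.piCongrLeft_apply_apply]
    rw [this]
  have hm : MeasurableSet {z : Fin (Fintype.card σ) → ℝ | eval z g = 0} :=
    (isClosed_eq (MvPolynomial.continuous_eval _) continuous_const).measurableSet
  rw [key, mp.measure_preimage hm.nullMeasurableSet, h0]


lemma mp_uncurry {α : Type*} [Fintype α] {β : α → Type*} [∀ a, Fintype (β a)]
    (γ : ∀ a, β a → Type*) [m : ∀ a b, MeasureSpace (γ a b)] [∀ a b, SigmaFinite (volume : Measure (γ a b))] :
    MeasurePreserving (fun (f : ∀ a b, γ a b) (i : Σ a, β a) => f i.1 i.2)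
      volume volume := by
  have hmeas : Measurable (fun (f : ∀ a b, γ a b) (i : Σ a, β a) => f i.1 i.2) :=
    measurable_pi_lambda _ fun i => (measurable_pi_apply i.2).comp (measurable_pi_apply i.1)
  refine ⟨hmeas, ?_⟩
  have : (volume : Measure (∀ i : Σ a, β a, γ i.1 i.2)) = Measure.pi (fun i : Σ a, β a => (volume : Measure (γ i.1 i.2))) :=
    volume_pi
  rw [this]
  refine (Measure.pi_eq (μ' := Measure.map (fun (f : ∀ a b, γ a b) (i : Σ a, β a) => f i.1 i.2) volume)
    (μ := fun i : Σ a, β a => (volume : Measure (γ i.1 i.2))) fun s hs => ?_).symm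
  rw [Measure.map_apply hmeas (MeasurableSet.univ_pi hs)]
  have hpre : (fun (f : ∀ a b, γ a b) (i : Σ a, β a) => f i.1 i.2) ⁻¹' (Set.univ.pi s)
      = Set.univ.pi (fun a => Set.univ.pi (fun b => s ⟨a, b⟩)) := by
    ext f
    simp [Set.mem_pi, Sigma.forall]
  rw [hpre, volume_pi_pi]
  have : ∀ a, volume (Set.univ.pi fun b => s ⟨a, b⟩) = ∏ b, volume (s ⟨a, b⟩) := fun a =>
    volume_pi_pi _
  simp_rw [this]
  rw [← Finset.univ_sigma_univ, Finset.prod_sigma]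

section Construction

variable {n : ℕ} (k : Fin n → ℕ)

/-- natural position of a coordinate in the concatenated ordering -/
def posN (p : (i : Fin n) × Fin (k i)) : ℕ :=
  (∑ j ∈ Finset.univ.filter (fun j => j < p.1), k j) + p.2.val

lemma posN_lt (p : (i : Fin n) × Fin (k i)) : posN k p < ∑ j, k j := by
  have h1 : (∑ j ∈ Finset.univ.filter (fun j => j < p.1), k j) + k p.1 ≤ ∑ j, k j := by
    have : insert p.1 (Finset.univ.filter (fun j => j < p.1)) ⊆ Finset.univ :=
      Finset.subset_univ _
    have hnotmem : p.1 ∉ Finset.univ.filter (fun j => j < p.1) := by simp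
    calc (∑ j ∈ Finset.univ.filter (fun j => j < p.1), k j) + k p.1
        = ∑ j ∈ insert p.1 (Finset.univ.filter (fun j => j < p.1)), k j := by
          rw [Finset.sum_insert hnotmem]; ring
      _ ≤ ∑ j, k j := Finset.sum_le_sum_of_subset this
  have := p.2.isLt
  unfold posN
  omega

lemma posN_between (p : (i : Fin n) × Fin (k i)) :
    (∑ j ∈ Finset.univ.filter (fun j => j < p.1), k j) ≤ posN k p ∧
    posN k p < (∑ j ∈ Finset.univ.filter (fun j => j < p.1), k j) + k p.1 := by
  have := p.2.isLt
  unfold posN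
  omega

lemma off_mono {i j : Fin n} (hij : i < j) :
    (∑ l ∈ Finset.univ.filter (fun l => l < i), k l) + k i
      ≤ ∑ l ∈ Finset.univ.filter (fun l => l < j), k l := by
  have hsub : insert i (Finset.univ.filter (fun l => l < i))
      ⊆ Finset.univ.filter (fun l => l < j) := by
    intro x hx
    simp only [Finset.mem_insert, Finset.mem_filter, Finset.mem_univ, true_and] at hx ⊢
    rcases hx with rfl | hx
    · exact hij
    · exact lt_trans hx hij
  have hnotmem : i ∉ Finset.univ.filter (fun l => l < i) := by simp
  calc (∑ l ∈ Finset.univ.filter (fun l => l < i), k l) + k i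
      = ∑ l ∈ insert i (Finset.univ.filter (fun l => l < i)), k l := by
        rw [Finset.sum_insert hnotmem]; ring
    _ ≤ _ := Finset.sum_le_sum_of_subset hsub

lemma posN_injective : Function.Injective (posN k) := by
  intro p q hpq
  obtain ⟨i, a⟩ := p
  obtain ⟨j, b⟩ := q
  rcases lt_trichotomy i j with h | h | h
  · exfalso
    have h1 := off_mono k h
    have h2 := (posN_between k ⟨i, a⟩).2
    have h3 := (posN_between k ⟨j, b⟩).1
    simp only at h1 h2 h3
    omega
  · subst h
    have : a.val = b.val := by
      have := congrArg (fun x => x) hpq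
      unfold posN at hpq
      simpa using hpq
    simp [Fin.ext_iff, this]
  · exfalso
    have h1 := off_mono k h
    have h2 := (posN_between k ⟨j, b⟩).2
    have h3 := (posN_between k ⟨i, a⟩).1
    simp only at h1 h2 h3
    omega

end Construction

section Construction2

variable {n : ℕ} {k : Fin n → ℕ}

lemma exists_coord_det_ne_zero (hn : 2 ≤ n) (hk : ∀ i, 1 ≤ k i)
    (hle : ∀ i, 2 * k i ≤ ∑ j, k j) :
    ∃ U : CoordParam n k, (coordMatrix k U).det ≠ 0 := by
  classical
  set K := ∑ j, k j with hKdef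
  have hK2 : 2 ≤ K := by
    calc 2 ≤ n := hn
    _ = ∑ _j : Fin n, 1 := by simp
    _ ≤ ∑ j, k j := Finset.sum_le_sum fun j _ => hk j
  haveI : NeZero K := ⟨by omega⟩
  set m : ℕ := K / 2 with hmdef
  -- the equivalence between the sigma type and ZMod K
  have hbij : Function.Bijective (fun p : (i : Fin n) × Fin (k i) => ((posN k p : ZMod K))) := by
    rw [Fintype.bijective_iff_injective_and_card]
    constructor
    · intro p q hpq
      apply posN_injective k
      have hp := posN_lt k p
      have hq := posN_lt k q
      have hpq' : ((posN k p : ℕ) : ZMod K) = ((posN k q : ℕ) : ZMod K) := hpq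
      have : (posN k p : ZMod K).val = (posN k q : ZMod K).val := by rw [hpq']
      rwa [ZMod.val_cast_of_lt hp, ZMod.val_cast_of_lt hq] at this
    · simp [ZMod.card, hKdef]
  set e : ((i : Fin n) × Fin (k i)) ≃ ZMod K := Equiv.ofBijective _ hbij with hedef
  have he_apply : ∀ p, e p = ((posN k p : ℕ) : ZMod K) := fun p => rfl
  -- the matrix
  set A₀ : Matrix (ZMod K) (ZMod K) ℝ := fun x y =>
    (if y = x + (m : ZMod K) then 1 else 0) + (if x = y + (m : ZMod K) then 1 else 0)
    with hA₀def
  -- same-block entries vanish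
  have hblock : ∀ (i : Fin n) (a b : Fin (k i)),
      ((posN k ⟨i, b⟩ : ℕ) : ZMod K) ≠ ((posN k ⟨i, a⟩ : ℕ) : ZMod K) + (m : ZMod K) := by
    intro i a b h
    have hmod : posN k ⟨i, b⟩ ≡ posN k ⟨i, a⟩ + m [MOD K] := by
      have : ((posN k ⟨i, b⟩ : ℕ) : ZMod K) = ((posN k ⟨i, a⟩ + m : ℕ) : ZMod K) := by
        push_cast
        exact h
      exact (ZMod.natCast_eq_natCast_iff _ _ _).mp this
    have hpa := posN_between k ⟨i, a⟩
    have hpb := posN_between k ⟨i, b⟩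
    have hpaK := posN_lt k ⟨i, a⟩
    have hpbK := posN_lt k ⟨i, b⟩
    have hki : 2 * k i ≤ K := hle i
    set pa := posN k ⟨i, a⟩
    set pb := posN k ⟨i, b⟩
    -- resolve the modular equation
    have hdisj : pb = pa + m ∨ pb + K = pa + m := by
      have h1 : pb % K = (pa + m) % K := hmod
      have h2 : pb % K = pb := Nat.mod_eq_of_lt hpbK
      rcases Nat.lt_or_ge (pa + m) K with hlt | hge
      · left; rw [h2, Nat.mod_eq_of_lt hlt] at h1; exact h1
      · right
        have hlt2 : pa + m - K < K := by omega
        have : (pa + m) % K = pa + m - K := by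
          rw [Nat.mod_eq_sub_mod hge, Nat.mod_eq_of_lt hlt2]
        rw [h2, this] at h1
        omega
    simp only at hpa hpb
    omega
  -- symmetry of A₀
  have hA₀symm : ∀ x y, A₀ y x = A₀ x y := by
    intro x y
    simp only [hA₀def]
    exact add_comm _ _
  -- kernel of A₀ is trivial
  have hker : ∀ v : ZMod K → ℝ, A₀ *ᵥ v = 0 → v = 0 := by
    intro v hv
    have row : ∀ x : ZMod K, v (x + (m : ZMod K)) + v (x - (m : ZMod K)) = 0 := by
      intro x
      have Hx := congrFun hv x
      simp only [Matrix.mulVec, dotProduct, hA₀def, Pi.zero_apply] at Hx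
      have hsplit : ∀ y : ZMod K,
          ((if y = x + (m : ZMod K) then (1:ℝ) else 0) +
            (if x = y + (m : ZMod K) then (1:ℝ) else 0)) * v y
          = (if y = x + (m : ZMod K) then v y else 0)
            + (if y = x - (m : ZMod K) then v y else 0) := by
        intro y
        have : (x = y + (m : ZMod K)) = (y = x - (m : ZMod K)) := by
          apply propext
          constructor
          · intro h; rw [h]; ring
          · intro h; rw [h]; ring
        rw [add_mul, ite_mul, ite_mul, one_mul, zero_mul]
        simp only [this]
      rw [Finset.sum_congr rfl (fun y _ => hsplit y), Finset.sum_add_distrib,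
        Finset.sum_ite_eq' Finset.univ (x + (m : ZMod K)) v,
        Finset.sum_ite_eq' Finset.univ (x - (m : ZMod K)) v] at Hx
      simpa using Hx
    have h2 : ∀ t : ZMod K, v (t + ((2 * m : ℕ) : ZMod K)) = - v t := by
      intro t
      have := row (t + (m : ZMod K))
      have e1 : t + (m : ZMod K) + (m : ZMod K) = t + ((2 * m : ℕ) : ZMod K) := by
        push_cast; ring
      have e2 : t + (m : ZMod K) - (m : ZMod K) = t := by ring
      rw [e1, e2] at this
      linarith
    have h3 : ∀ (j : ℕ) (t : ZMod K),
        v (t + ((j * (2 * m) : ℕ) : ZMod K)) = (-1 : ℝ) ^ j * v t := by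
      intro j
      induction j with
      | zero => intro t; simp
      | succ j ihj =>
        intro t
        have ecast : (((j + 1) * (2 * m) : ℕ) : ZMod K)
            = ((j * (2 * m) : ℕ) : ZMod K) + ((2 * m : ℕ) : ZMod K) := by
          push_cast; ring
        rw [ecast, ← add_assoc, h2 (t + ((j * (2 * m) : ℕ) : ZMod K)), ihj t]
        ring
    have hneg : ∀ t : ZMod K, v t = - v t := by
      intro t
      rcases Nat.even_or_odd K with hKe | hKo
      · obtain ⟨c, hc⟩ := hKe
        have h2m : 2 * m = K := by omega
        have := h2 t
        rw [h2m, ZMod.natCast_self, add_zero] at this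
        linarith [this]
      · have := h3 K t
        have hc : ((K * (2 * m) : ℕ) : ZMod K) = 0 := by
          push_cast
          rw [ZMod.natCast_self]
          ring
        rw [hc, add_zero, Odd.neg_one_pow hKo] at this
        linarith [this]
    funext t
    have := hneg t
    simp only [Pi.zero_apply]
    linarith
  -- determinant of A₀ nonzero
  have hA₀det : A₀.det ≠ 0 := by
    intro h0
    obtain ⟨v, hv0, hv⟩ := (Matrix.exists_mulVec_eq_zero_iff).mpr h0
    exact hv0 (hker v hv)
  -- the parameter
  refine ⟨fun p a b => A₀ (e ⟨p.1.1, a⟩) (e ⟨p.1.2, b⟩), ?_⟩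
  have hcoord : coordMatrix k (fun p a b => A₀ (e ⟨p.1.1, a⟩) (e ⟨p.1.2, b⟩))
      = A₀.submatrix e e := by
    funext p q
    obtain ⟨i, a⟩ := p
    obtain ⟨j, b⟩ := q
    simp only [coordMatrix, Matrix.submatrix_apply]
    split_ifs with h h'
    · rfl
    · exact hA₀symm _ _
    · have hij : i = j := le_antisymm (not_lt.mp h') (not_lt.mp h)
      subst hij
      have h1 : A₀ (e ⟨i, a⟩) (e ⟨i, b⟩)
          = (if e ⟨i, b⟩ = e ⟨i, a⟩ + (m : ZMod K) then (1:ℝ) else 0)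
            + (if e ⟨i, a⟩ = e ⟨i, b⟩ + (m : ZMod K) then (1:ℝ) else 0) := rfl
      rw [h1, if_neg, if_neg, add_zero]
      · exact hblock i b a
      · exact hblock i a b
  rw [hcoord, Matrix.det_submatrix_equiv_self]
  exact hA₀det

end Construction2

section Singular

variable {n : ℕ} {k : Fin n → ℕ}

lemma coord_det_zero_of_big (i : Fin n) (hi : (∑ j, k j) < 2 * k i)
    (U : CoordParam n k) : (coordMatrix k U).det = 0 := by
  classical
  set K := ∑ j, k j with hKdef
  set A := coordMatrix k U with hAdef
  -- the linear map from block-i coefficients to the rows outside block i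
  set W := {q : (i' : Fin n) × Fin (k i') // q.1 ≠ i} with hWdef
  set L : (Fin (k i) → ℝ) →ₗ[ℝ] (W → ℝ) :=
    { toFun := fun c w => ∑ a, A w.1 ⟨i, a⟩ * c a,
      map_add' := by
        intro c c'
        funext w
        simp [mul_add, Finset.sum_add_distrib]
      map_smul' := by
        intro r c
        funext w
        simp only [Pi.smul_apply, smul_eq_mul, Finset.mul_sum]
        exact Finset.sum_congr rfl fun x _ => by
          simp only [RingHom.id_apply]
          ring } with hLdef
  -- cardinalities
  have hcard1 : Module.finrank ℝ (Fin (k i) → ℝ) = k i := by simp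
  have hcardfib : Fintype.card {q : (i' : Fin n) × Fin (k i') // q.1 = i} = k i := by
    have efib : {q : (i' : Fin n) × Fin (k i') // q.1 = i} ≃ Fin (k i) :=
      { toFun := fun q => Fin.cast (congrArg k q.2) q.1.2
        invFun := fun a => ⟨⟨i, a⟩, rfl⟩
        left_inv := by
          rintro ⟨⟨i', a⟩, h⟩
          subst h
          rfl
        right_inv := fun a => rfl }
    rw [Fintype.card_congr efib, Fintype.card_fin]
  have hcardSigma : Fintype.card ((i' : Fin n) × Fin (k i')) = K := by
    simp [Fintype.card_sigma, hKdef]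
  have hcardW : Fintype.card W = K - k i := by
    have h := Fintype.card_subtype_compl (fun q : (i' : Fin n) × Fin (k i') => q.1 = i)
    rw [hcardSigma, hcardfib] at h
    exact h
  have hcard2 : Module.finrank ℝ (W → ℝ) = K - k i := by
    simp [hcardW]
  -- L is not injective
  have hLnotinj : ¬ Function.Injective L := by
    intro hinj
    have := LinearMap.finrank_le_finrank_of_injective hinj
    rw [hcard1, hcard2] at this
    have hkiK : k i ≤ K := by
      rw [hKdef]
      exact Finset.single_le_sum (fun j _ => Nat.zero_le _) (Finset.mem_univ i)
    omega
  -- get a kernel element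
  obtain ⟨c, hc0, hLc⟩ : ∃ c : Fin (k i) → ℝ, c ≠ 0 ∧ L c = 0 := by
    have : LinearMap.ker L ≠ ⊥ := by
      intro h
      exact hLnotinj (LinearMap.ker_eq_bot.mp h)
    obtain ⟨c, hc, hc0⟩ := Submodule.exists_mem_ne_zero_of_ne_bot this
    exact ⟨c, hc0, hc⟩
  -- build the kernel vector of A
  set v : ((i' : Fin n) × Fin (k i')) → ℝ :=
    fun q => if h : q.1 = i then c (Fin.cast (congrArg k h) q.2) else 0 with hvdef
  have hv0 : v ≠ 0 := by
    intro h
    apply hc0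
    funext a
    have := congrFun h ⟨i, a⟩
    simpa [hvdef] using this
  have hAv : A *ᵥ v = 0 := by
    funext q
    have hsum : (A *ᵥ v) q = ∑ i', ∑ a : Fin (k i'), A q ⟨i', a⟩ * v ⟨i', a⟩ := by
      rw [Matrix.mulVec, dotProduct, ← Finset.univ_sigma_univ, Finset.sum_sigma]
    rw [hsum]
    rw [Finset.sum_eq_single_of_mem i (Finset.mem_univ i) ?side]
    case side =>
      intro i' _ hi'
      apply Finset.sum_eq_zero
      intro a _
      have : v ⟨i', a⟩ = 0 := by simp [hvdef, hi']
      rw [this, mul_zero]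
    have hvia : ∀ a : Fin (k i), v ⟨i, a⟩ = c a := by
      intro a
      simp [hvdef]
    by_cases hq : q.1 = i
    · apply Finset.sum_eq_zero
      intro a _
      have : A q ⟨i, a⟩ = 0 := by
        simp only [hAdef, coordMatrix]
        rw [dif_neg, dif_neg]
        · simp [hq]
        · simp [hq]
      rw [this, zero_mul]
    · have := congrFun hLc (⟨q, hq⟩ : W)
      simp only [hLdef, LinearMap.coe_mk, AddHom.coe_mk, Pi.zero_apply] at this
      simp only [Pi.zero_apply]
      rw [← this]
      exact Finset.sum_congr rfl fun a _ => by rw [hvia a]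
  rw [← Matrix.exists_mulVec_eq_zero_iff]
  exact ⟨v, hv0, hAv⟩

end Singular

section Assembly

variable {n : ℕ} {k : Fin n → ℕ}

lemma coord_nonunit_null (hn : 2 ≤ n) (hk : ∀ i, 1 ≤ k i)
    (hle : ∀ i, 2 * k i ≤ ∑ j, k j) :
    volume {U : CoordParam n k | ¬ IsUnit (coordMatrix k U)} = 0 := by
  classical
  have mp1 := mp_uncurry (α := {p : Fin n × Fin n // p.1 < p.2})
    (β := fun p => Fin (k p.1.1)) (fun p a => Fin (k p.1.2) → ℝ)
  have mp2 := mp_uncurry (α := Σ p : {p : Fin n × Fin n // p.1 < p.2}, Fin (k p.1.1))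
    (β := fun x => Fin (k x.1.1.2)) (fun x b => ℝ)
  set σT := Σ x : Σ p : {p : Fin n × Fin n // p.1 < p.2}, Fin (k p.1.1), Fin (k x.1.1.2)
    with hσTdef
  set J : CoordParam n k → (σT → ℝ) := fun U y => U y.1.1 y.1.2 y.2 with hJdef
  have mpJ : MeasurePreserving J volume volume := mp2.comp mp1
  set P : MvPolynomial σT ℝ := (Matrix.of fun p q : (i : Fin n) × Fin (k i) =>
    if h : p.1 < q.1 then (MvPolynomial.X ⟨⟨⟨(p.1, q.1), h⟩, p.2⟩, q.2⟩ : MvPolynomial σT ℝ)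
    else if h' : q.1 < p.1 then MvPolynomial.X ⟨⟨⟨(q.1, p.1), h'⟩, q.2⟩, p.2⟩ else 0).det
    with hPdef
  have hevalP : ∀ x : σT → ℝ,
      MvPolynomial.eval x P = (coordMatrix k (fun p a b => x ⟨⟨p, a⟩, b⟩)).det := by
    intro x
    rw [hPdef, RingHom.map_det]
    congr 1
    funext p q
    simp only [RingHom.mapMatrix_apply, Matrix.map_apply, Matrix.of_apply, coordMatrix,
      apply_dite (MvPolynomial.eval x), MvPolynomial.eval_X, map_zero]
  have hPne : P ≠ 0 := by
    obtain ⟨U₀, hU₀⟩ := exists_coord_det_ne_zero hn hk hle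
    intro h
    apply hU₀
    have h2 := hevalP (J U₀)
    rw [h, map_zero] at h2
    exact h2.symm
  have hmeas : MeasurableSet {x : σT → ℝ | MvPolynomial.eval x P = 0} :=
    (isClosed_eq (MvPolynomial.continuous_eval _) continuous_const).measurableSet
  have hset : {U : CoordParam n k | ¬ IsUnit (coordMatrix k U)}
      = J ⁻¹' {x | MvPolynomial.eval x P = 0} := by
    ext U
    simp only [Set.mem_setOf_eq, Set.mem_preimage, hevalP]
    rw [Matrix.isUnit_iff_isUnit_det, isUnit_iff_ne_zero, not_not]
  rw [hset, mpJ.measure_preimage hmeas.nullMeasurableSet]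
  exact aux_null P hPne

end Assembly


/-- The set of parameters `U` for which the coordination polymatrix game fails to have a
unique Nash equilibrium (i.e. the consolidated payoff matrix `A(U)` is not invertible)
has Lebesgue measure zero iff `kᵢ ≤ K/2` for all agents `i`.  Moreover, if `kᵢ > K/2`
for some agent `i`, then `A(U)` is singular for every `U`. -/
theorem stmt5 (n : ℕ) (hn : 2 ≤ n) (k : Fin n → ℕ) (hk : ∀ i, 1 ≤ k i) :
    (volume {U : CoordParam n k | ¬ IsUnit (coordMatrix k U)} = 0 ↔
      ∀ i, 2 * k i ≤ ∑ j, k j)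
    ∧ ((∃ i, (∑ j, k j) < 2 * k i) →
        ∀ U : CoordParam n k, (coordMatrix k U).det = 0) := by
  refine ⟨⟨fun h => ?_, fun h => coord_nonunit_null hn hk h⟩,
    fun ⟨i, hi⟩ U => coord_det_zero_of_big i hi U⟩
  by_contra hc
  push_neg at hc
  obtain ⟨i, hi⟩ := hc
  have hall : {U : CoordParam n k | ¬ IsUnit (coordMatrix k U)} = Set.univ := by
    ext U
    simp only [Set.mem_setOf_eq, Set.mem_univ, iff_true]
    rw [Matrix.isUnit_iff_isUnit_det, isUnit_iff_ne_zero, not_not]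
    exact coord_det_zero_of_big i hi U
  rw [hall] at h
  have hpos : (0 : ENNReal) < volume (Set.univ : Set (CoordParam n k)) :=
    isOpen_univ.measure_pos volume Set.univ_nonempty
  exact hpos.ne' h
end

section
/- Fix n ≥ 2 and k_1,…,k_n ≥ 1 with K = Σ_{i=1}^n k_i, and for U = (U^{(ij)})_{i≠j} ∈ ∏_{i≠j} ℝ^{k_i×k_j}, let A(U) ∈ ℝ^{K×K} be the block matrix with (i,j) block U^{(ij)} for i ≠ j and zero diagonal blocks (the consolidated payoff matrix of a general polymatrix game). Then the set {U : A(U) is not invertible} has Lebesgue measure zero in ∏_{i≠j} ℝ^{k_i×k_j} if and only if k_i ≤ K/2 for all i ∈ {1,…,n}. Moreover, if k_i > K/2 for some i, then A(U) is singular for every U, so no polymatrix game with these dimensions has a unique Nash equilibrium. -/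
open Matrix MeasureTheory

/-- The parameter space of general polymatrix games: one matrix
`U⁽ⁱʲ⁾ ∈ ℝ^{kᵢ × kⱼ}` for each ordered pair `i ≠ j`. -/
abbrev GenParam (n : ℕ) (k : Fin n → ℕ) : Type :=
  (p : {p : Fin n × Fin n // p.1 ≠ p.2}) → Fin (k p.1.1) → Fin (k p.1.2) → ℝ

/-- The consolidated payoff matrix of the general polymatrix game with parameters `U`:
the `(i,j)` block is `U⁽ⁱʲ⁾` for `i ≠ j` and the diagonal blocks are zero. -/
def genMatrix {n : ℕ} (k : Fin n → ℕ) (U : GenParam n k) :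
    Matrix ((i : Fin n) × Fin (k i)) ((i : Fin n) × Fin (k i)) ℝ :=
  fun p q =>
    if h : p.1 ≠ q.1 then U ⟨(p.1, q.1), h⟩ p.2 q.2 else 0

abbrev FlatIdx (n : ℕ) (k : Fin n → ℕ) : Type :=
  Σ p : {p : Fin n × Fin n // p.1 ≠ p.2}, Fin (k p.1.1) × Fin (k p.1.2)


lemma measurable_mveval {ι : Type*} [Fintype ι] (p : MvPolynomial ι ℝ) :
    Measurable fun x : ι → ℝ => MvPolynomial.eval x p := by
  induction p using MvPolynomial.induction_on with
  | C a => simpa using measurable_const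
  | add p q hp hq => simp only [map_add]; exact hp.add hq
  | mul_X p i hp => simp only [map_mul, MvPolynomial.eval_X]; exact hp.mul (measurable_pi_apply i)

lemma null_mvpoly_fin : ∀ (m : ℕ) (p : MvPolynomial (Fin m) ℝ), p ≠ 0 →
    volume {x : Fin m → ℝ | MvPolynomial.eval x p = 0} = 0 := by
  intro m
  induction m with
  | zero =>
    intro p hp
    obtain ⟨c, rfl⟩ := MvPolynomial.C_surjective (Fin 0) p
    have hc : c ≠ 0 := fun h => hp (by simp [h])
    have : {x : Fin 0 → ℝ | MvPolynomial.eval x (MvPolynomial.C c) = 0} = ∅ := by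
      ext x; simp [hc]
    rw [this]; simp
  | succ m IH =>
    intro p hp
    set q : Polynomial (MvPolynomial (Fin m) ℝ) := MvPolynomial.finSuccEquiv ℝ m p with hq
    have hqne : q ≠ 0 := by
      intro h
      apply hp
      have := congrArg (MvPolynomial.finSuccEquiv ℝ m).symm (h ▸ hq.symm)
      simpa using this
    have hlead : q.coeff q.natDegree ≠ 0 := by
      have := Polynomial.leadingCoeff_ne_zero.mpr hqne
      rwa [Polynomial.leadingCoeff] at this
    obtain ⟨μ, hμ⟩ := MvPolynomial.ne_zero_iff.mp hlead
    set c : Polynomial ℝ :=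
      ∑ j ∈ q.support, Polynomial.C (MvPolynomial.coeff μ (q.coeff j)) * Polynomial.X ^ j with hc
    have hcc : c.coeff q.natDegree = MvPolynomial.coeff μ (q.coeff q.natDegree) := by
      rw [hc, Polynomial.finset_sum_coeff]
      rw [Finset.sum_eq_single q.natDegree]
      · rw [Polynomial.coeff_C_mul, Polynomial.coeff_X_pow, if_pos rfl, mul_one]
      · intro j hj hne
        simp [Polynomial.coeff_C_mul, Polynomial.coeff_X_pow, Ne.symm hne]
      · intro h
        exact absurd (Polynomial.mem_support_iff.mpr hlead) h
    have hcne : c ≠ 0 := fun h => hμ (by rw [← hcc, h]; simp)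
    have coeffr : ∀ a : ℝ,
        MvPolynomial.coeff μ (Polynomial.eval (MvPolynomial.C a) q) = Polynomial.eval a c := by
      intro a
      rw [Polynomial.eval_eq_sum, Polynomial.sum_def, hc]
      rw [Polynomial.eval_finset_sum]
      rw [MvPolynomial.coeff_sum]
      refine Finset.sum_congr rfl fun j hj => ?_
      rw [← map_pow, mul_comm, MvPolynomial.coeff_C_mul]
      rw [Polynomial.eval_mul, Polynomial.eval_C, Polynomial.eval_pow, Polynomial.eval_X, mul_comm]
    have key : ∀ (a : ℝ) (y : Fin m → ℝ),
        MvPolynomial.eval (Fin.cons a y : Fin (m+1) → ℝ) p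
          = MvPolynomial.eval y (Polynomial.eval (MvPolynomial.C a) q) := by
      intro a y
      rw [MvPolynomial.eval_eq_eval_mv_eval', ← hq]
      show _ = (MvPolynomial.eval y) (Polynomial.eval₂ (RingHom.id _) (MvPolynomial.C a) q)
      rw [Polynomial.hom_eval₂, Polynomial.eval_map]
      simp
    have hEme : MeasurableSet {x : Fin (m+1) → ℝ | MvPolynomial.eval x p = 0} :=
      (measurable_mveval p) (measurableSet_singleton 0)
    set e := MeasurableEquiv.piFinSuccAbove (fun _ : Fin (m+1) => ℝ) 0 with he
    have hmp := MeasureTheory.measurePreserving_piFinSuccAbove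
      (fun _ : Fin (m+1) => (volume : Measure ℝ)) 0
    have hsymm := hmp.symm e
    have hvol : (volume : Measure (Fin (m+1) → ℝ)) {x | MvPolynomial.eval x p = 0}
        = ((volume : Measure ℝ).prod (Measure.pi fun _ : Fin m => volume))
          (⇑e.symm ⁻¹' {x | MvPolynomial.eval x p = 0}) := by
      rw [hsymm.measure_preimage hEme.nullMeasurableSet]
      rfl
    rw [hvol]
    have hSme : MeasurableSet (⇑e.symm ⁻¹' {x : Fin (m+1) → ℝ | MvPolynomial.eval x p = 0}) :=
      e.symm.measurable hEme
    rw [MeasureTheory.Measure.measure_prod_null hSme]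
    have hbadsub : {a : ℝ | Polynomial.eval (MvPolynomial.C a) q = 0} ⊆ {a | c.IsRoot a} := by
      intro a ha
      have : MvPolynomial.coeff μ (Polynomial.eval (MvPolynomial.C a) q) = 0 := by
        rw [Set.mem_setOf_eq.mp ha]; simp
      rw [coeffr a] at this
      exact this
    have hbad : volume {a : ℝ | Polynomial.eval (MvPolynomial.C a) q = 0} = 0 :=
      measure_mono_null hbadsub ((Polynomial.finite_setOf_isRoot hcne).measure_zero _)
    have hae : ∀ᵐ a : ℝ, Polynomial.eval (MvPolynomial.C a) q ≠ 0 := by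
      rw [ae_iff]
      simpa using hbad
    filter_upwards [hae] with a ha
    show (volume : Measure (Fin m → ℝ)) _ = 0
    have hslice : (Prod.mk a ⁻¹' (⇑e.symm ⁻¹' {x : Fin (m+1) → ℝ | MvPolynomial.eval x p = 0}))
        = {y : Fin m → ℝ | MvPolynomial.eval y (Polynomial.eval (MvPolynomial.C a) q) = 0} := by
      ext y
      have hesymm : e.symm (a, y) = (Fin.cons a y : Fin (m+1) → ℝ) := by
        rw [he]
        simp [MeasurableEquiv.piFinSuccAbove]
        rfl
      simp only [Set.mem_preimage, Set.mem_setOf_eq, hesymm, key a y]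
    rw [hslice]
    have := IH _ ha
    simpa using this

lemma null_mvpoly {ι : Type*} [Fintype ι] (p : MvPolynomial ι ℝ) (hp : p ≠ 0) :
    volume {x : ι → ℝ | MvPolynomial.eval x p = 0} = 0 := by
  classical
  set e := Fintype.equivFin ι with he
  have hmp := MeasureTheory.volume_measurePreserving_piCongrLeft (fun _ : ι => ℝ) e.symm
  set Φ := MeasurableEquiv.piCongrLeft (fun _ : ι => ℝ) e.symm with hΦ
  have hEme : MeasurableSet {x : ι → ℝ | MvPolynomial.eval x p = 0} :=
    (measurable_mveval p) (measurableSet_singleton 0)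
  have h1 : volume {x : ι → ℝ | MvPolynomial.eval x p = 0}
      = volume (⇑Φ ⁻¹' {x : ι → ℝ | MvPolynomial.eval x p = 0}) := by
    rw [hmp.measure_preimage hEme.nullMeasurableSet]
  rw [h1]
  have h2 : (⇑Φ ⁻¹' {x : ι → ℝ | MvPolynomial.eval x p = 0})
      = {y : Fin (Fintype.card ι) → ℝ | MvPolynomial.eval y (MvPolynomial.rename e p) = 0} := by
    ext y
    have hΦy : Φ y = y ∘ e := by
      funext i
      rw [hΦ]
      simp [MeasurableEquiv.piCongrLeft, Equiv.piCongrLeft]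
    simp only [Set.mem_preimage, Set.mem_setOf_eq, hΦy, MvPolynomial.eval_rename]
  rw [h2]
  exact null_mvpoly_fin _ _ (fun h => hp (by simpa using congrArg (MvPolynomial.rename e.symm) h))

def flatten {n : ℕ} {k : Fin n → ℕ} (U : GenParam n k) : FlatIdx n k → ℝ :=
  fun v => U v.1 v.2.1 v.2.2

lemma measurable_flatten {n : ℕ} {k : Fin n → ℕ} :
    Measurable (flatten (n := n) (k := k)) :=
  measurable_pi_lambda _ fun v =>
    (measurable_pi_apply v.2.2).comp ((measurable_pi_apply v.2.1).comp (measurable_pi_apply v.1))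

lemma flatten_measurePreserving {n : ℕ} {k : Fin n → ℕ} :
    MeasurePreserving (flatten (n := n) (k := k)) volume volume := by
  refine ⟨measurable_flatten, ?_⟩
  have : (volume : Measure (FlatIdx n k → ℝ)) = Measure.pi fun _ => volume := volume_pi
  rw [this]
  refine (Measure.pi_eq fun s hs => ?_).symm
  rw [Measure.map_apply measurable_flatten (MeasurableSet.univ_pi hs)]
  have hpre : flatten ⁻¹' (Set.univ.pi s)
      = Set.univ.pi (fun p : {p : Fin n × Fin n // p.1 ≠ p.2} =>
          Set.univ.pi (fun r : Fin (k p.1.1) =>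
            Set.univ.pi (fun c : Fin (k p.1.2) => s ⟨p, (r, c)⟩))) := by
    ext U
    simp only [Set.mem_preimage, Set.mem_univ_pi, flatten]
    constructor
    · intro h p r c; exact h ⟨p, (r, c)⟩
    · rintro h ⟨p, r, c⟩; exact h p r c
  rw [hpre]
  rw [volume_pi_pi]
  rw [Finset.univ_sigma_univ.symm, Finset.prod_sigma]
  refine Finset.prod_congr rfl fun p _ => ?_
  calc volume (Set.univ.pi fun r : Fin (k p.1.1) =>
          Set.univ.pi fun c : Fin (k p.1.2) => s ⟨p, (r, c)⟩)
      = ∏ r, volume (Set.univ.pi fun c : Fin (k p.1.2) => s ⟨p, (r, c)⟩) := volume_pi_pi _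
    _ = ∏ r, ∏ c, volume (s ⟨p, (r, c)⟩) := Finset.prod_congr rfl fun r _ => volume_pi_pi _
    _ = ∏ v : Fin (k p.1.1) × Fin (k p.1.2), volume (s ⟨p, v⟩) :=
        (Fintype.prod_prod_type fun v : Fin (k p.1.1) × Fin (k p.1.2) => volume (s ⟨p, v⟩)).symm


section Perm
variable {n : ℕ} (k : Fin n → ℕ)

def offset (i : Fin n) : ℕ := ∑ j ∈ Finset.Iio i, k j

lemma offset_add_le (i : Fin n) : offset k i + k i ≤ ∑ j, k j := by
  have : offset k i + k i = ∑ j ∈ insert i (Finset.Iio i), k j := by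
    rw [Finset.sum_insert (by simp), add_comm, offset]
  rw [this]
  exact Finset.sum_le_sum_of_subset (Finset.subset_univ _)

lemma offset_mono {i i' : Fin n} (h : i < i') : offset k i + k i ≤ offset k i' := by
  have : offset k i + k i = ∑ j ∈ insert i (Finset.Iio i), k j := by
    rw [Finset.sum_insert (by simp), add_comm, offset]
  rw [this, offset]
  refine Finset.sum_le_sum_of_subset ?_
  intro j hj
  simp only [Finset.mem_insert, Finset.mem_Iio] at hj ⊢
  rcases hj with rfl | hj
  · exact h
  · exact hj.trans h

def toFlat (p : Σ i : Fin n, Fin (k i)) : Fin (∑ j, k j) :=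
  ⟨offset k p.1 + p.2.1, lt_of_lt_of_le (by have := p.2.2; omega) (offset_add_le k p.1)⟩

lemma toFlat_inj : Function.Injective (toFlat k) := by
  rintro ⟨i, r⟩ ⟨i', r'⟩ h
  have hval : offset k i + r.1 = offset k i' + r'.1 := congrArg Fin.val h
  rcases lt_trichotomy i i' with hlt | heq | hlt
  · have h1 := offset_mono k hlt
    have := r.2
    omega
  · subst heq
    have : r = r' := Fin.ext (by omega)
    rw [this]
  · have h1 := offset_mono k hlt
    have := r'.2
    omega

noncomputable def flatEquiv : (Σ i : Fin n, Fin (k i)) ≃ Fin (∑ j, k j) :=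
  Equiv.ofBijective (toFlat k)
    ((Fintype.bijective_iff_injective_and_card _).mpr ⟨toFlat_inj k, by simp⟩)

lemma block_of_mem {q : Σ i : Fin n, Fin (k i)} {i : Fin n}
    (h1 : offset k i ≤ ((flatEquiv k) q).1) (h2 : ((flatEquiv k) q).1 < offset k i + k i) :
    q.1 = i := by
  rcases q with ⟨i', r⟩
  have hval : ((flatEquiv k) ⟨i', r⟩).1 = offset k i' + r.1 := rfl
  rw [hval] at h1 h2
  rcases lt_trichotomy i' i with hlt | heq | hlt
  · have := offset_mono k hlt
    have := r.2
    omega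
  · exact heq
  · have := offset_mono k hlt
    omega

end Perm

lemma exists_good_perm {n : ℕ} (k : Fin n → ℕ) [NeZero n] (hk : ∀ i, 1 ≤ k i)
    (hbal : ∀ i, 2 * k i ≤ ∑ j, k j) :
    ∃ π : Equiv.Perm (Σ i : Fin n, Fin (k i)), ∀ p, (π p).1 ≠ p.1 := by
  classical
  obtain ⟨imax, -, hmax⟩ := Finset.exists_mem_eq_sup Finset.univ
    (Finset.univ_nonempty (α := Fin n)) k
  set m := Finset.univ.sup k with hm
  have hle : ∀ i, k i ≤ m := fun i => Finset.le_sup (Finset.mem_univ i)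
  have h2m : 2 * m ≤ ∑ j, k j := hmax ▸ hbal imax
  have hm1 : 1 ≤ m := le_trans (hk imax) (hle imax)
  have hK : 0 < ∑ j, k j := by omega
  haveI : NeZero (∑ j, k j) := ⟨by omega⟩
  set E := flatEquiv k with hE
  set sh : Fin (∑ j, k j) ≃ Fin (∑ j, k j) := Equiv.addRight ⟨m, by omega⟩ with hsh
  refine ⟨(E.trans sh).trans E.symm, fun p => ?_⟩
  intro hcon
  set q := ((E.trans sh).trans E.symm) p with hq
  have hEq : E q = sh (E p) := by
    rw [hq]; simp
  have hEqv : (E q).1 = ((E p).1 + m) % (∑ j, k j) := by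
    rw [hEq, hsh]
    rfl
  -- block membership facts
  have hqblock : offset k p.1 ≤ (E q).1 ∧ (E q).1 < offset k p.1 + k p.1 := by
    have hEqval : (E q).1 = offset k q.1 + q.2.1 := rfl
    have hoff : offset k q.1 = offset k p.1 := by rw [hcon]
    have hkq : k q.1 = k p.1 := by rw [hcon]
    have hsnd : (q.2 : ℕ) < k q.1 := q.2.2
    rw [hEqval, hoff]
    omega
  have hpval : (E p).1 = offset k p.1 + p.2.1 := rfl
  set S := offset k p.1 with hS
  set x := (E p).1 with hx
  have hx1 : S ≤ x := by rw [hpval]; omega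
  have hx2 : x < S + k p.1 := by rw [hpval]; have := p.2.2; omega
  have hSa : S + k p.1 ≤ ∑ j, k j := offset_add_le k p.1
  have ham : k p.1 ≤ m := hle p.1
  have hxK : x < ∑ j, k j := by omega
  by_cases hcase : x + m < ∑ j, k j
  · rw [Nat.mod_eq_of_lt hcase] at hEqv
    omega
  · have h1 : (x + m) % (∑ j, k j) = x + m - (∑ j, k j) := by
      rw [Nat.mod_eq_sub_mod (by omega), Nat.mod_eq_of_lt (by omega)]
    rw [h1] at hEqv
    omega

lemma exists_det_ne_zero {n : ℕ} (k : Fin n → ℕ) [NeZero n] (hk : ∀ i, 1 ≤ k i)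
    (hbal : ∀ i, 2 * k i ≤ ∑ j, k j) :
    ∃ U : GenParam n k, (genMatrix k U).det ≠ 0 := by
  classical
  obtain ⟨π, hπ⟩ := exists_good_perm k hk hbal
  refine ⟨fun pq r c => if π ⟨pq.1.1, r⟩ = (⟨pq.1.2, c⟩ : Σ i : Fin n, Fin (k i)) then 1 else 0,
    ?_⟩
  have hmat : genMatrix k (fun pq r c =>
      if π ⟨pq.1.1, r⟩ = (⟨pq.1.2, c⟩ : Σ i : Fin n, Fin (k i)) then 1 else 0)
      = π.permMatrix ℝ := by
    ext p q
    rw [genMatrix, Equiv.Perm.permMatrix, PEquiv.toMatrix_apply]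
    by_cases h : p.1 ≠ q.1
    · rw [dif_pos h]
      simp only [Equiv.toPEquiv_apply, Option.mem_def, Option.some.injEq]
    · rw [dif_neg h]
      push_neg at h
      have : π p ≠ q := fun he => hπ p (by rw [he, h])
      simp only [Equiv.toPEquiv_apply, Option.mem_def, Option.some.injEq]
      rw [if_neg this]
  rw [hmat, Matrix.det_permutation]
  rcases Int.units_eq_one_or (Equiv.Perm.sign π) with h | h <;> simp [h]

lemma det_zero_of_big {n : ℕ} (k : Fin n → ℕ) {i0 : Fin n} (hbig : (∑ j, k j) < 2 * k i0)
    (U : GenParam n k) : (genMatrix k U).det = 0 := by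
  classical
  by_contra hdet
  set A := genMatrix k U with hA
  set B : Matrix (Fin (k i0)) {q : Σ i : Fin n, Fin (k i) // q.1 ≠ i0} ℝ :=
    fun r q => A ⟨i0, r⟩ q.1 with hB
  have hcard : Fintype.card {q : Σ i : Fin n, Fin (k i) // q.1 ≠ i0}
      < Fintype.card (Fin (k i0)) := by
    have e0 : {q : Σ i : Fin n, Fin (k i) // q.1 = i0} ≃ Fin (k i0) :=
      ⟨fun q => q.2 ▸ q.1.2, fun r => ⟨⟨i0, r⟩, rfl⟩,
        by rintro ⟨⟨i, r⟩, rfl⟩; rfl, fun r => rfl⟩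
    have h1 : Fintype.card {q : Σ i : Fin n, Fin (k i) // q.1 = i0} = k i0 := by
      rw [Fintype.card_congr e0, Fintype.card_fin]
    have h2 := Fintype.card_subtype_compl (fun q : Σ i : Fin n, Fin (k i) => q.1 = i0)
    have h3 : Fintype.card (Σ i : Fin n, Fin (k i)) = ∑ j, k j := by simp
    have h4 : Fintype.card {q : Σ i : Fin n, Fin (k i) // ¬ q.1 = i0}
        = Fintype.card {q : Σ i : Fin n, Fin (k i) // q.1 ≠ i0} := rfl
    rw [Fintype.card_fin]
    omega
  have hker : LinearMap.ker B.vecMulLinear ≠ ⊥ := by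
    refine LinearMap.ker_ne_bot_of_finrank_lt ?_
    rw [Module.finrank_fintype_fun_eq_card, Module.finrank_fintype_fun_eq_card]
    exact hcard
  obtain ⟨w, hw, hw0⟩ := (Submodule.ne_bot_iff _).mp hker
  have hwB : Matrix.vecMul w B = 0 := by
    have := LinearMap.mem_ker.mp hw
    rwa [Matrix.vecMulLinear_apply] at this
  set v : (Σ i : Fin n, Fin (k i)) → ℝ := fun p => if h : p.1 = i0 then w (h ▸ p.2) else 0
    with hv
  have hvA : Matrix.vecMul v A = 0 := by
    funext q
    have hsum : Matrix.vecMul v A q = ∑ p : Σ i : Fin n, Fin (k i), v p * A p q := by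
      rw [Matrix.vecMul, dotProduct]
    rw [hsum, ← Finset.univ_sigma_univ, Finset.sum_sigma]
    rw [Finset.sum_eq_single i0]
    · have hterm : ∀ r : Fin (k i0), v ⟨i0, r⟩ * A ⟨i0, r⟩ q = w r * A ⟨i0, r⟩ q := by
        intro r
        have : v ⟨i0, r⟩ = w r := by rw [hv]; simp
        rw [this]
      rw [Finset.sum_congr rfl fun r _ => hterm r]
      by_cases hq : q.1 = i0
      · have : ∀ r : Fin (k i0), A ⟨i0, r⟩ q = 0 := by
          intro r
          rw [hA, genMatrix]
          have : ¬ ((⟨i0, r⟩ : Σ i : Fin n, Fin (k i)).1 ≠ q.1) := by simp [hq]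
          rw [dif_neg this]
        simp [this]
      · have : ∑ r : Fin (k i0), w r * A ⟨i0, r⟩ q = Matrix.vecMul w B ⟨q, hq⟩ := by
          rw [Matrix.vecMul, dotProduct, hB]
        rw [this, hwB]
        rfl
    · intro i _ hi
      have : ∀ r : Fin (k i), v ⟨i, r⟩ = 0 := by
        intro r
        rw [hv]
        exact dif_neg hi
      simp [this]
    · intro h
      exact absurd (Finset.mem_univ i0) h
  have hv0 : v = 0 := Matrix.eq_zero_of_vecMul_eq_zero hdet hvA
  apply hw0
  funext r
  have : v ⟨i0, r⟩ = w r := by rw [hv]; simp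
  rw [← this, hv0]
  rfl


lemma null_flatten_poly {n : ℕ} {k : Fin n → ℕ} (P : MvPolynomial (FlatIdx n k) ℝ) (hP : P ≠ 0) :
    volume {U : GenParam n k | MvPolynomial.eval (flatten U) P = 0} = 0 := by
  have hZ : MeasurableSet {x : FlatIdx n k → ℝ | MvPolynomial.eval x P = 0} :=
    (measurable_mveval P) (measurableSet_singleton 0)
  have h : {U : GenParam n k | MvPolynomial.eval (flatten U) P = 0}
      = flatten ⁻¹' {x : FlatIdx n k → ℝ | MvPolynomial.eval x P = 0} := rfl
  rw [h, flatten_measurePreserving.measure_preimage hZ.nullMeasurableSet]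
  exact null_mvpoly P hP

noncomputable def detPoly (n : ℕ) (k : Fin n → ℕ) : MvPolynomial (FlatIdx n k) ℝ :=
  Matrix.det (fun p q : Σ i : Fin n, Fin (k i) =>
    if h : p.1 ≠ q.1 then MvPolynomial.X ⟨⟨(p.1, q.1), h⟩, (p.2, q.2)⟩ else 0)

lemma eval_detPoly {n : ℕ} {k : Fin n → ℕ} (U : GenParam n k) :
    MvPolynomial.eval (flatten U) (detPoly n k) = (genMatrix k U).det := by
  rw [detPoly]; refine (RingHom.map_det _ _).trans ?_
  congr 1
  ext p q
  change MvPolynomial.eval (flatten U) (if h : p.1 ≠ q.1 then MvPolynomial.X ⟨⟨(p.1, q.1), h⟩, (p.2, q.2)⟩ else 0) = (if h : p.1 ≠ q.1 then U ⟨(p.1, q.1), h⟩ p.2 q.2 else 0)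
  by_cases h : p.1 ≠ q.1
  · rw [dif_pos h, dif_pos h, MvPolynomial.eval_X]
    rfl
  · rw [dif_neg h, dif_neg h, map_zero]

/-- The set of parameters `U` for which the general polymatrix game fails to have a
unique Nash equilibrium (i.e. the consolidated payoff matrix `A(U)` is not invertible)
has Lebesgue measure zero iff `kᵢ ≤ K/2` for all agents `i`.  Moreover, if `kᵢ > K/2`
for some agent `i`, then `A(U)` is singular for every `U`. -/
theorem stmt6 (n : ℕ) (hn : 2 ≤ n) (k : Fin n → ℕ) (hk : ∀ i, 1 ≤ k i) :
    (volume {U : GenParam n k | ¬ IsUnit (genMatrix k U)} = 0 ↔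
      ∀ i, 2 * k i ≤ ∑ j, k j)
    ∧ ((∃ i, (∑ j, k j) < 2 * k i) →
        ∀ U : GenParam n k, (genMatrix k U).det = 0) := by
  classical
  haveI : NeZero n := ⟨by omega⟩
  refine ⟨⟨?_, ?_⟩, ?_⟩
  · intro h0 i
    by_contra hbig
    push_neg at hbig
    have hall : {U : GenParam n k | ¬ IsUnit (genMatrix k U)} = Set.univ := by
      ext U
      simp only [Set.mem_setOf_eq, Set.mem_univ, iff_true]
      intro hU
      have hd := det_zero_of_big k hbig U
      have := (Matrix.isUnit_iff_isUnit_det _).mp hU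
      rw [hd] at this
      exact not_isUnit_zero this
    rw [hall] at h0
    exact (isOpen_univ.measure_ne_zero (volume : Measure (GenParam n k))
      Set.univ_nonempty) h0
  · intro hbal
    obtain ⟨U0, hU0⟩ := exists_det_ne_zero k hk hbal
    have hPne : detPoly n k ≠ 0 := fun h => hU0 (by rw [← eval_detPoly, h]; simp)
    have hsub : {U : GenParam n k | ¬ IsUnit (genMatrix k U)}
        ⊆ {U : GenParam n k | MvPolynomial.eval (flatten U) (detPoly n k) = 0} := by
      intro U hU
      rw [Set.mem_setOf_eq, eval_detPoly]
      by_contra hne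
      exact hU ((Matrix.isUnit_iff_isUnit_det _).mpr (isUnit_iff_ne_zero.mpr hne))
    exact measure_mono_null hsub (null_flatten_poly _ hPne)
  · rintro ⟨i, hbig⟩ U
    exact det_zero_of_big k hbig U
end

section
/- Let K = 2m+1 be odd with m ≥ 1 and define A ∈ ℝ^{K×K} by A_{w, m+w} = A_{m+w, w} = 1 for all w ∈ {1,…,m+1}, A_{w, m+1+w} = A_{m+1+w, w} = 1 for all w ∈ {1,…,m}, and A_{u,v} = 0 for all other pairs (u,v). Then A = Aᵀ, det A = 2 (so A is invertible), and for every set S ⊆ {1,…,K} of at most m consecutive indices, the principal submatrix (A_{u,v})_{u,v ∈ S} is identically zero. -/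
open Matrix Equiv
open scoped Fin.NatCast Fin.IntCast Fin.CommRing

section Aux

variable (m : ℕ)

/-- Auxiliary: addition by a natural cast is a power of `finRotate`. -/
lemma stmt10_addRight_cast (k : ℕ) :
    Equiv.addRight ((k : Fin (2 * m + 1))) = (finRotate (2 * m + 1)) ^ k := by
  induction k with
  | zero => ext x; simp
  | succ k ih =>
    ext x
    simp only [pow_succ, Equiv.Perm.mul_apply, ← ih, Equiv.coe_addRight,
      finRotate_succ_apply, Nat.cast_add, Nat.cast_one, add_assoc]
    exact congrArg Fin.val (by ring)

end Aux

/-- For odd `K = 2m+1` with `m ≥ 1`, the matrix `A` with `A_{w, m+w} = A_{m+w, w} = 1`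
for `w ∈ {1,…,m+1}` and `A_{w, m+1+w} = A_{m+1+w, w} = 1` for `w ∈ {1,…,m}` (here
written 0-indexed: the entries at distance `m` or `m+1` from the diagonal are `1`) and
all other entries zero is symmetric, has `det A = 2` (so it is invertible), and every
principal submatrix on a set of at most `m` consecutive indices is identically zero. -/
theorem stmt10 (m : ℕ) (hm : 1 ≤ m)
    (A : Matrix (Fin (2 * m + 1)) (Fin (2 * m + 1)) ℝ)
    (hA : ∀ u v : Fin (2 * m + 1),
      A u v = if (v : ℕ) = (u : ℕ) + m ∨ (u : ℕ) = (v : ℕ) + m ∨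
                 (v : ℕ) = (u : ℕ) + (m + 1) ∨ (u : ℕ) = (v : ℕ) + (m + 1)
              then 1 else 0) :
    Aᵀ = A ∧ A.det = 2 ∧
      ∀ s c : ℕ, c ≤ m →
        ∀ u v : Fin (2 * m + 1),
          s ≤ (u : ℕ) → (u : ℕ) < s + c → s ≤ (v : ℕ) → (v : ℕ) < s + c →
          A u v = 0 := by
  have hKpos : 0 < 2 * m + 1 := by omega
  set c : Fin (2 * m + 1) := (m : Fin (2 * m + 1)) with hc
  have hcval : (c : ℕ) = m := by
    rw [hc, Fin.val_natCast, Nat.mod_eq_of_lt (by omega)]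
  -- characterization of `b = a + c` on values
  have hadd : ∀ a b : Fin (2 * m + 1),
      b = a + c ↔ ((b : ℕ) = (a : ℕ) + m ∨ (a : ℕ) = (b : ℕ) + (m + 1)) := by
    intro a b
    have hav : (a : ℕ) < 2 * m + 1 := a.isLt
    have hbv : (b : ℕ) < 2 * m + 1 := b.isLt
    have hval : ((a + c : Fin (2 * m + 1)) : ℕ) = ((a : ℕ) + m) % (2 * m + 1) := by
      rw [Fin.val_add, hcval]
    rw [Fin.ext_iff, hval]
    rcases lt_or_ge ((a : ℕ) + m) (2 * m + 1) with h | h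
    · rw [Nat.mod_eq_of_lt h]; omega
    · have : ((a : ℕ) + m) % (2 * m + 1) = (a : ℕ) + m - (2 * m + 1) := by
        rw [Nat.mod_eq_sub_mod h, Nat.mod_eq_of_lt (by omega)]
      rw [this]; omega
  -- rewrite A using Fin arithmetic
  have hB : ∀ u v : Fin (2 * m + 1),
      A u v = if v = u + c ∨ u = v + c then 1 else 0 := by
    intro u v
    rw [hA u v]
    apply if_congr _ rfl rfl
    rw [hadd u v, hadd v u]
    tauto
  have hcc : c + c = (-1 : Fin (2 * m + 1)) := by
    have h2 : (c + c) + 1 = 0 := by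
      have h3 : (c + c) + 1 = ((2 * m + 1 : ℕ) : Fin (2 * m + 1)) := by
        rw [hc]; push_cast; ring
      rw [h3, Fin.natCast_self]
    exact add_eq_zero_iff_eq_neg.mp h2
  have hone : (1 : Fin (2 * m + 1)) ≠ 0 := by
    intro h
    have := congrArg Fin.val h
    rw [Fin.val_one', Fin.val_zero, Nat.mod_eq_of_lt (by omega)] at this
    omega
  refine ⟨?_, ?_, ?_⟩
  · ext u v
    rw [transpose_apply, hB, hB]
    exact if_congr or_comm rfl rfl
  · -- determinant
    set σp : Equiv.Perm (Fin (2 * m + 1)) := Equiv.addRight c with hσp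
    set σn : Equiv.Perm (Fin (2 * m + 1)) := Equiv.addRight (-c) with hσn
    have hne : σp ≠ σn := by
      intro h
      have h0 : c = -c := by
        have h1 := congrArg (fun f : Equiv.Perm (Fin (2 * m + 1)) => f 0) h
        simpa only [hσp, hσn, Equiv.coe_addRight, zero_add] using h1
      have h2 : c + c = 0 := by nth_rewrite 2 [h0]; exact add_neg_cancel c
      rw [hcc] at h2
      exact hone (neg_eq_zero.mp h2)
    -- classification of contributing permutations
    have hclass : ∀ σ : Equiv.Perm (Fin (2 * m + 1)),
        (∀ i, σ i = i + c ∨ σ i = i + (-c)) → σ = σp ∨ σ = σn := by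
      intro σ hσ
      have hstep : ∀ i, σ i = i + c → σ (i - 1) = (i - 1) + c := by
        intro i hi
        rcases hσ (i - 1) with h | h
        · exact h
        · exfalso
          have h1 : i - 1 = i + (c + c) := by rw [hcc]; ring
          have h2 : σ (i - 1) = σ i := by
            rw [h, hi, h1]; ring
          have h3 : i - 1 = i := σ.injective h2
          have : (1 : Fin (2 * m + 1)) = 0 := by
            have := sub_eq_self.mp h3; exact this
          exact hone this
      rcases Classical.em (∃ i, σ i = i + c) with ⟨i0, hi0⟩ | hno
      · left
        have hall : ∀ k : ℕ, σ (i0 - (k : Fin (2 * m + 1))) = (i0 - (k : Fin (2 * m + 1))) + c := by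
          intro k
          induction k with
          | zero => simpa using hi0
          | succ k ih =>
            have : i0 - ((k + 1 : ℕ) : Fin (2 * m + 1)) = (i0 - (k : Fin (2 * m + 1))) - 1 := by
              push_cast; ring
            rw [this]
            exact hstep _ ih
        refine Equiv.ext fun j => ?_
        have hrepr : j = i0 - (((i0 - j : Fin (2 * m + 1)) : ℕ) : Fin (2 * m + 1)) := by
          rw [Fin.cast_val_eq_self]; ring
        rw [hσp]
        simp only [Equiv.coe_addRight]
        rw [hrepr]
        exact hall _
      · right
        refine Equiv.ext fun j => ?_
        rcases hσ j with h | h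
        · exact absurd ⟨j, h⟩ hno
        · rw [h, hσn]; simp
    -- values of the products
    have hprodp : ∀ i : Fin (2 * m + 1), A (σp i) i = 1 := by
      intro i
      rw [hσp]
      simp only [Equiv.coe_addRight]
      rw [hB]
      exact if_pos (Or.inr rfl)
    have hprodn : ∀ i : Fin (2 * m + 1), A (σn i) i = 1 := by
      intro i
      rw [hσn]
      simp only [Equiv.coe_addRight]
      rw [hB]
      exact if_pos (Or.inl (by ring))
    -- signs
    have hsignrot : Equiv.Perm.sign (finRotate (2 * m + 1)) = 1 := by
      rw [sign_finRotate]
      exact Even.neg_one_pow ⟨m, by omega⟩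
    have hsignp : Equiv.Perm.sign σp = 1 := by
      rw [hσp, hc, stmt10_addRight_cast, map_pow, hsignrot, one_pow]
    have hnegc : -c = ((m + 1 : ℕ) : Fin (2 * m + 1)) := by
      rw [neg_eq_iff_add_eq_zero, hc]
      have h4 : (m : Fin (2 * m + 1)) + ((m + 1 : ℕ) : Fin (2 * m + 1))
          = ((2 * m + 1 : ℕ) : Fin (2 * m + 1)) := by push_cast; ring
      rw [h4, Fin.natCast_self]
    have hsignn : Equiv.Perm.sign σn = 1 := by
      rw [hσn, hnegc, stmt10_addRight_cast, map_pow, hsignrot, one_pow]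
    rw [Matrix.det_apply]
    have hvanish : ∀ σ ∈ (Finset.univ : Finset (Equiv.Perm (Fin (2 * m + 1)))),
        σ ∉ ({σp, σn} : Finset (Equiv.Perm (Fin (2 * m + 1)))) →
        Equiv.Perm.sign σ • ∏ i, A (σ i) i = 0 := by
      intro σ _ hσnot
      by_cases hp : ∀ i, A (σ i) i ≠ 0
      · exfalso
        have hcond : ∀ i, σ i = i + c ∨ σ i = i + (-c) := by
          intro i
          have := hp i
          rw [hB] at this
          by_cases hif : i = σ i + c ∨ σ i = i + c
          · rcases hif with h | h
            · right
              rw [eq_add_neg_iff_add_eq]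
              exact h.symm
            · left; exact h
          · rw [if_neg hif] at this
            exact absurd rfl this
        rcases hclass σ hcond with h | h
        · exact hσnot (by simp [h])
        · exact hσnot (by simp [h])
      · push_neg at hp
        obtain ⟨i, hi⟩ := hp
        have hz : ∏ j, A (σ j) j = (0 : ℝ) := Finset.prod_eq_zero (Finset.mem_univ i) hi
        rw [hz, smul_zero]
    rw [← Finset.sum_subset (Finset.subset_univ ({σp, σn} : Finset (Equiv.Perm (Fin (2 * m + 1))))) hvanish,
      Finset.sum_pair hne]
    rw [Finset.prod_congr rfl (fun i _ => hprodp i), Finset.prod_congr rfl (fun i _ => hprodn i),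
      Finset.prod_const_one, hsignp, hsignn, one_smul]
    norm_num
  · intro s c' hc' u v hsu huc hsv hvc
    rw [hA u v, if_neg (by omega)]
end

section
/- Let A ∈ ℝ^{K×K} satisfy A = −Aᵀ, let b ∈ ℝ^K, and let x* ∈ ℝ^K satisfy A x* = b. If x : [0,∞) → ℝ^K is differentiable with x'(t) = A x(t) − b for all t ≥ 0, then ‖x(t) − x*‖² = ‖x(0) − x*‖² for all t ≥ 0, where ‖·‖ is the Euclidean norm. -/
open Matrix

/-- Invariant energy: if `A = -Aᵀ`, `A x* = b` (i.e. `x*` is a Nash equilibrium of the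
zero-sum polymatrix game with consolidated payoff matrix `A` and cost vector `b`), and
`x` follows continuous-time gradient descent `x'(t) = A x(t) - b` on `[0,∞)`, then the
squared Euclidean distance `‖x(t) - x*‖²` is constant: it equals `‖x(0) - x*‖²` for all
`t ≥ 0`. -/
theorem stmt13 (K : ℕ) (A : Matrix (Fin K) (Fin K) ℝ) (hA : A = -Aᵀ)
    (b : Fin K → ℝ) (xstar : EuclideanSpace ℝ (Fin K)) (hstar : A *ᵥ xstar = b)
    (x : ℝ → EuclideanSpace ℝ (Fin K))
    (hode : ∀ t : ℝ, 0 ≤ t →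
      HasDerivWithinAt x (WithLp.toLp 2 (A *ᵥ (x t) - b)) (Set.Ici (0 : ℝ)) t) :
    ∀ t : ℝ, 0 ≤ t → ‖x t - xstar‖ ^ 2 = ‖x 0 - xstar‖ ^ 2 := by
  have skew : ∀ v : Fin K → ℝ, (A *ᵥ v) ⬝ᵥ v = 0 := by
    intro v
    have h1 : (A *ᵥ v) ⬝ᵥ v = -((Aᵀ *ᵥ v) ⬝ᵥ v) := by
      nth_rewrite 1 [hA]; simp [Matrix.neg_mulVec]
    have h2 : (Aᵀ *ᵥ v) ⬝ᵥ v = (A *ᵥ v) ⬝ᵥ v := by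
      rw [Matrix.mulVec_transpose, ← Matrix.dotProduct_mulVec, dotProduct_comm]
    rw [h2] at h1
    linarith
  have key : ∀ s : ℝ, 0 ≤ s →
      HasDerivWithinAt (fun u => ‖x u - xstar‖ ^ 2) 0 (Set.Ici (0:ℝ)) s := by
    intro s hs
    have hx := hode s hs
    have hv : HasDerivWithinAt (fun u => x u - xstar)
        (WithLp.toLp 2 (A *ᵥ (fun i => x s i - xstar i) : Fin K → ℝ) : EuclideanSpace ℝ (Fin K))
        (Set.Ici (0:ℝ)) s := by
      have heq : A *ᵥ (x s) - b = A *ᵥ (fun i => x s i - xstar i) := by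
        rw [← hstar, ← Matrix.mulVec_sub]; rfl
      have := hx.sub_const xstar
      rw [heq] at this
      exact this
    have hinner := hv.inner ℝ hv
    set D : EuclideanSpace ℝ (Fin K) :=
      (WithLp.toLp 2 (A *ᵥ (fun i => x s i - xstar i) : Fin K → ℝ) : EuclideanSpace ℝ (Fin K)) with hD
    have hip : (inner ℝ D (x s - xstar) : ℝ) = 0 := by
      have hd := skew (fun i => x s i - xstar i)
      simp only [PiLp.inner_apply, RCLike.inner_apply, starRingEnd_apply, star_trivial]
      simpa [hD, dotProduct, mul_comm] using hd
    rw [real_inner_comm] at hinner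
    rw [hip, add_zero] at hinner
    have hfe : (fun u => ‖x u - xstar‖ ^ 2)
        = fun u => (inner ℝ (x u - xstar) (x u - xstar) : ℝ) := by
      funext u; rw [real_inner_self_eq_norm_sq]
    rw [hfe]
    exact hinner
  intro t ht
  have hcont : ContinuousOn (fun u => ‖x u - xstar‖ ^ 2) (Set.Icc 0 t) := by
    intro s hs
    exact ((key s hs.1).continuousWithinAt).mono (Set.Icc_subset_Ici_self)
  have := constant_of_has_deriv_right_zero hcont (fun s hs =>
    (key s hs.1).mono (Set.Ici_subset_Ici.2 hs.1))
  exact this t (Set.mem_Icc.2 ⟨ht, le_refl t⟩)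
end

section
/- Let A ∈ ℝ^{K×K} satisfy A = −Aᵀ, let b ∈ ℝ^K, and suppose the set N = {x ∈ ℝ^K : A x = b} is nonempty. If x : [0,∞) → ℝ^K is differentiable with x'(t) = A x(t) − b for all t ≥ 0, then the time-average x̄(t) = (1/t)∫₀ᵗ x(s) ds converges to the set N, i.e., the Euclidean distance dist(x̄(t), N) → 0 as t → ∞. -/
open Matrix MeasureTheory
open scoped RealInnerProductSpace

/-- The matrix `A` acting on Euclidean space as a linear map. -/
def mulVecE (K : ℕ) (A : Matrix (Fin K) (Fin K) ℝ) :
    EuclideanSpace ℝ (Fin K) →ₗ[ℝ] EuclideanSpace ℝ (Fin K) where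
  toFun v := WithLp.toLp 2 (A *ᵥ v.ofLp)
  map_add' u v := by ext i; simp [Matrix.mulVec_add]
  map_smul' c v := by ext i; simp [Matrix.mulVec_smul]

lemma skew_inner (K : ℕ) (A : Matrix (Fin K) (Fin K) ℝ) (hA : A = -Aᵀ)
    (v : EuclideanSpace ℝ (Fin K)) : ⟪mulVecE K A v, v⟫ = 0 := by
  have h : ⟪mulVecE K A v, v⟫ = ∑ i, ∑ j, A i j * v j * v i := by
    rw [PiLp.inner_apply]
    simp [mulVecE, Matrix.mulVec, dotProduct, Finset.sum_mul]
    simp only [Finset.mul_sum]; refine Finset.sum_congr rfl fun i _ => Finset.sum_congr rfl fun j _ => by ring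
  have h2 : ∑ i, ∑ j, A i j * v j * v i = -∑ i, ∑ j, A i j * v j * v i := by
    nth_rewrite 1 [hA]
    rw [Finset.sum_comm]
    rw [← Finset.sum_neg_distrib]
    congr 1; ext i
    rw [← Finset.sum_neg_distrib]
    congr 1; ext j
    simp [Matrix.transpose_apply]; ring
  rw [h]; linarith

/-- Distance to the solution set of `Tl y = Tl xs` is controlled by the residual. -/
lemma infdist_le_residual (K : ℕ) (Tl : EuclideanSpace ℝ (Fin K) →ₗ[ℝ] EuclideanSpace ℝ (Fin K))
    (N : Set (EuclideanSpace ℝ (Fin K))) (xs : EuclideanSpace ℝ (Fin K))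
    (hNset : ∀ y, Tl y = Tl xs → y ∈ N) :
    ∃ c : ℝ, 0 < c ∧ ∀ w, Metric.infDist w N ≤ c * ‖Tl w - Tl xs‖ := by
  classical
  set Kk := LinearMap.ker Tl with hKk
  have hker : LinearMap.ker (Tl.domRestrict Kkᗮ) = ⊥ := by
    rw [LinearMap.ker_eq_bot']
    rintro ⟨u, hu⟩ h
    have hu0 : u ∈ Kk := h
    have : u = 0 := by
      have := (Submodule.orthogonal_disjoint Kk).le_bot ⟨hu0, hu⟩
      simpa using this
    simp [this]
  obtain ⟨c, hc0, hcal⟩ := (Tl.domRestrict Kkᗮ).exists_antilipschitzWith hker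
  refine ⟨c, hc0, fun w => ?_⟩
  set v := w - xs with hv
  set p : Kk := Kk.orthogonalProjectionOnto v with hp
  have hq : v - (p : EuclideanSpace ℝ (Fin K)) ∈ Kkᗮ :=
    Kk.sub_starProjection_mem_orthogonal v
  have hTp : Tl (p : EuclideanSpace ℝ (Fin K)) = 0 := p.2
  have hmem : xs + (p : EuclideanSpace ℝ (Fin K)) ∈ N := by
    apply hNset
    rw [map_add, hTp, add_zero]
  calc Metric.infDist w N ≤ dist w (xs + (p : EuclideanSpace ℝ (Fin K))) :=
        Metric.infDist_le_dist_of_mem hmem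
    _ = ‖v - (p : EuclideanSpace ℝ (Fin K))‖ := by
        rw [dist_eq_norm]; congr 1; rw [hv]; abel
    _ ≤ c * ‖Tl.domRestrict Kkᗮ ⟨v - (p : EuclideanSpace ℝ (Fin K)), hq⟩‖ := by
        have := hcal.le_mul_dist ⟨v - (p : EuclideanSpace ℝ (Fin K)), hq⟩ 0
        simpa [dist_eq_norm] using this
    _ = c * ‖Tl v - Tl (p : EuclideanSpace ℝ (Fin K))‖ := by
        rw [LinearMap.domRestrict_apply, map_sub]
    _ = c * ‖Tl w - Tl xs‖ := by rw [hTp, sub_zero, hv, map_sub]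

/-- Time-average convergence to the set of Nash equilibria: if `A = -Aᵀ`, the set
`N = {x : A x = b}` of Nash equilibria of the zero-sum polymatrix game is nonempty, and
`x` follows continuous-time gradient descent `x'(t) = A x(t) - b` on `[0,∞)`, then the
Euclidean distance from the time-average `x̄(t) = (1/t) ∫₀ᵗ x(s) ds` to `N` tends to `0`
as `t → ∞`. -/
theorem stmt14 (K : ℕ) (A : Matrix (Fin K) (Fin K) ℝ) (hA : A = -Aᵀ)
    (b : Fin K → ℝ)
    (N : Set (EuclideanSpace ℝ (Fin K))) (hN : N = {y : EuclideanSpace ℝ (Fin K) | A *ᵥ y.ofLp = b})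
    (hNne : N.Nonempty)
    (x : ℝ → EuclideanSpace ℝ (Fin K))
    (hode : ∀ t : ℝ, 0 ≤ t →
      HasDerivWithinAt x (WithLp.toLp 2 (A *ᵥ (x t).ofLp - b)) (Set.Ici (0 : ℝ)) t) :
    Filter.Tendsto
      (fun t : ℝ => Metric.infDist ((1 / t) • ∫ s in (0 : ℝ)..t, x s) N)
      Filter.atTop (nhds 0) := by
  classical
  obtain ⟨xs, hxsN⟩ := hNne
  have hxs : A *ᵥ xs.ofLp = b := by rw [hN] at hxsN; exact hxsN
  set Tl := mulVecE K A with hTl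
  set T : EuclideanSpace ℝ (Fin K) →L[ℝ] EuclideanSpace ℝ (Fin K) :=
    LinearMap.toContinuousLinearMap Tl with hT
  set bE : EuclideanSpace ℝ (Fin K) := WithLp.toLp 2 (b : Fin K → ℝ) with hbE
  have hTapp : ∀ w : EuclideanSpace ℝ (Fin K), T w = WithLp.toLp 2 (A *ᵥ w.ofLp) := fun w => rfl
  have hTlxs : Tl xs = bE := by rw [hbE, ← hxs]; rfl
  -- residual bound
  obtain ⟨c, hc0, hc⟩ := infdist_le_residual K Tl N xs
    (by intro y hy; rw [hN]; show A *ᵥ y.ofLp = b; exact congrArg WithLp.ofLp (hy.trans hTlxs))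
  -- derivative of the shifted trajectory
  have hg : ∀ t ∈ Set.Ici (0:ℝ), HasDerivWithinAt (fun s => x s - xs)
      (Tl (x t - xs)) (Set.Ici 0) t := by
    intro t ht
    have h1 := (hode t ht).sub_const xs
    have h2 : Tl (x t - xs) = WithLp.toLp 2 (A *ᵥ (x t).ofLp - b) := by
      rw [map_sub, hTlxs]; rfl
    rw [h2]; exact h1
  -- norm conservation
  have hconst : ∀ t : ℝ, 0 ≤ t → ‖x t - xs‖ = ‖x 0 - xs‖ := by
    intro t ht
    rcases eq_or_lt_of_le ht with h | h
    · rw [← h]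
    set g : ℝ → EuclideanSpace ℝ (Fin K) := fun s => x s - xs with hgdef
    set f : ℝ → ℝ := fun s => ⟪g s, g s⟫ with hf
    have hgIcc : ∀ s ∈ Set.Icc (0:ℝ) t, HasDerivWithinAt g (Tl (g s)) (Set.Icc 0 t) s :=
      fun s hs => (hg s hs.1).mono Set.Icc_subset_Ici_self
    have hfd : ∀ s ∈ Set.Icc (0:ℝ) t, HasDerivWithinAt f
        (⟪g s, Tl (g s)⟫ + ⟪Tl (g s), g s⟫) (Set.Icc 0 t) s :=
      fun s hs => (hgIcc s hs).inner ℝ (hgIcc s hs)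
    have hzero : ∀ s, (⟪g s, Tl (g s)⟫ + ⟪Tl (g s), g s⟫ : ℝ) = 0 := by
      intro s
      have h1 : ⟪Tl (g s), g s⟫ = 0 := skew_inner K A hA (g s)
      rw [real_inner_comm (g s)] at *
      rw [h1]; ring
    have hdiff : DifferentiableOn ℝ f (Set.Icc 0 t) :=
      fun s hs => ((hfd s hs).differentiableWithinAt)
    have hderiv : ∀ s ∈ Set.Ico (0:ℝ) t, derivWithin f (Set.Icc 0 t) s = 0 := by
      intro s hs
      have hs' : s ∈ Set.Icc (0:ℝ) t := ⟨hs.1, hs.2.le⟩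
      rw [(hfd s hs').derivWithin ((uniqueDiffOn_Icc h) s hs'), hzero]
    have hft : f t = f 0 :=
      constant_of_derivWithin_zero hdiff hderiv t ⟨ht, le_refl t⟩
    have h1 : ‖g t‖ ^ 2 = ‖g 0‖ ^ 2 := by
      rw [← real_inner_self_eq_norm_sq, ← real_inner_self_eq_norm_sq]; exact hft
    nlinarith [norm_nonneg (g t), norm_nonneg (g 0)]
  set C : ℝ := ‖x 0 - xs‖ with hC
  have hbound : ∀ t : ℝ, 0 ≤ t → ‖x t - x 0‖ ≤ 2 * C := by
    intro t ht
    have : x t - x 0 = (x t - xs) - (x 0 - xs) := by abel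
    rw [this]
    calc ‖(x t - xs) - (x 0 - xs)‖ ≤ ‖x t - xs‖ + ‖x 0 - xs‖ := norm_sub_le _ _
      _ = 2 * C := by rw [hconst t ht]; ring
  -- continuity and integrability
  have hxcont : ContinuousOn x (Set.Ici 0) := fun s hs => (hode s hs).continuousWithinAt
  have hint : ∀ t : ℝ, 0 ≤ t → IntervalIntegrable x volume 0 t := by
    intro t ht
    exact (hxcont.mono (by rw [Set.uIcc_of_le ht]; exact Set.Icc_subset_Ici_self)).intervalIntegrable
  have hTint : ∀ t : ℝ, 0 ≤ t →
      IntervalIntegrable (fun s => T (x s)) volume 0 t := by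
    intro t ht
    exact ((T.continuous.comp_continuousOn hxcont).mono
      (by rw [Set.uIcc_of_le ht]; exact Set.Icc_subset_Ici_self)).intervalIntegrable
  -- FTC
  have hftc : ∀ t : ℝ, 0 ≤ t → ∫ s in (0:ℝ)..t, (T (x s) - bE) = x t - x 0 := by
    intro t ht
    apply intervalIntegral.integral_eq_sub_of_hasDeriv_right_of_le ht
      (hxcont.mono Set.Icc_subset_Ici_self)
    · intro s hs
      have : Set.Ioi s ⊆ Set.Ici (0:ℝ) := fun r hr => le_of_lt (lt_trans hs.1 hr)
      have h2 : T (x s) - bE = WithLp.toLp 2 (A *ᵥ (x s).ofLp - b) := rfl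
      rw [h2]
      exact (hode s hs.1.le).mono this
    · exact (hTint t ht).sub intervalIntegrable_const
  -- key identity for the average
  have hkey : ∀ t : ℝ, 0 < t →
      T ((1/t) • ∫ s in (0:ℝ)..t, x s) - bE = (1/t) • (x t - x 0) := by
    intro t ht
    rw [T.map_smul, ← T.intervalIntegral_comp_comm (hint t ht.le)]
    have h2 : ∫ s in (0:ℝ)..t, (T (x s) - bE) = x t - x 0 := hftc t ht.le
    rw [intervalIntegral.integral_sub (hTint t ht.le) intervalIntegrable_const,
      intervalIntegral.integral_const, sub_zero] at h2
    have h3 : ∫ s in (0:ℝ)..t, T (x s) = (x t - x 0) + t • bE := by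
      rw [← h2]; abel
    rw [h3, smul_add, smul_smul]
    rw [one_div_mul_cancel (ne_of_gt ht), one_smul]
    abel
  -- squeeze
  apply squeeze_zero' (g := fun t => (c * (2 * C)) * (1/t))
  · filter_upwards with t using Metric.infDist_nonneg
  · filter_upwards [Filter.eventually_ge_atTop (1:ℝ)] with t ht
    have ht0 : 0 < t := lt_of_lt_of_le one_pos ht
    calc Metric.infDist ((1 / t) • ∫ s in (0:ℝ)..t, x s) N
        ≤ c * ‖Tl ((1 / t) • ∫ s in (0:ℝ)..t, x s) - Tl xs‖ := hc _
      _ = c * ‖(1/t) • (x t - x 0)‖ := by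
          rw [show Tl ((1 / t) • ∫ s in (0:ℝ)..t, x s) = T ((1 / t) • ∫ s in (0:ℝ)..t, x s) from rfl,
            hTlxs, hkey t ht0]
      _ = c * ((1/t) * ‖x t - x 0‖) := by
          rw [norm_smul, Real.norm_eq_abs, abs_of_pos (by positivity)]
      _ ≤ c * ((1/t) * (2 * C)) := by
          apply mul_le_mul_of_nonneg_left _ hc0.le
          exact mul_le_mul_of_nonneg_left (hbound t ht0.le) (by positivity)
      _ = (c * (2 * C)) * (1/t) := by ring
  · have := tendsto_inv_atTop_zero (𝕜 := ℝ)
    simpa [one_div] using this.const_mul (c * (2 * C))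
end

section
/- Let A ∈ ℝ^{K×K} satisfy A = −Aᵀ, let b ∈ ℝ^K, and suppose the affine set N = {x ∈ ℝ^K : A x = b} is nonempty. Let x : [0,∞) → ℝ^K be differentiable with x'(t) = A x(t) − b for all t ≥ 0, and let x* be the unique point of N closest (in Euclidean norm) to x(0). Then for every d ∈ ℝ^K with A d = 0 (equivalently, such that x* + d ∈ N), one has dᵀ x(t) = dᵀ x* for all t ≥ 0. -/
open Matrix

/-- If `A = -Aᵀ`, the affine set `N = {x : A x = b}` of Nash equilibria is nonempty,
`x` follows continuous-time gradient descent `x'(t) = A x(t) - b` on `[0,∞)`, and `x*`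
is the point of `N` closest (in Euclidean norm) to `x(0)`, then for every direction `d`
with `A d = 0` (equivalently, `x* + d ∈ N`) one has `dᵀ x(t) = dᵀ x*` for all
`t ≥ 0`. -/
theorem stmt15 (K : ℕ) (A : Matrix (Fin K) (Fin K) ℝ) (hA : A = -Aᵀ)
    (b : Fin K → ℝ)
    (N : Set (EuclideanSpace ℝ (Fin K))) (hN : N = {y : EuclideanSpace ℝ (Fin K) | A *ᵥ y = b})
    (hNne : N.Nonempty)
    (x : ℝ → EuclideanSpace ℝ (Fin K))
    (hode : ∀ t : ℝ, 0 ≤ t →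
      HasDerivWithinAt x (WithLp.toLp 2 (A *ᵥ (x t) - b)) (Set.Ici (0 : ℝ)) t)
    (xstar : EuclideanSpace ℝ (Fin K)) (hstar : xstar ∈ N)
    (hclosest : ∀ y ∈ N, dist (x 0) xstar ≤ dist (x 0) y) :
    ∀ d : EuclideanSpace ℝ (Fin K), A *ᵥ d = 0 →
      ∀ t : ℝ, 0 ≤ t → (inner ℝ d (x t) : ℝ) = (inner ℝ d xstar : ℝ) := by
  intro d hd t ht
  -- inner as dot product
  have hinner : ∀ u v : EuclideanSpace ℝ (Fin K), (inner ℝ u v : ℝ) = u ⬝ᵥ v := by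
    intro u v
    simp [PiLp.inner_apply, dotProduct, RCLike.inner_apply, mul_comm]
  have hAT : Aᵀ = -A := by nth_rewrite 2 [hA]; rw [neg_neg]
  -- d is orthogonal to A v for any v
  have hkey : ∀ v : Fin K → ℝ, d ⬝ᵥ (A *ᵥ v) = 0 := by
    intro v
    rw [Matrix.dotProduct_mulVec, ← Matrix.mulVec_transpose, hAT]
    simp [Matrix.neg_mulVec, hd]
  -- d ⬝ᵥ b = 0
  obtain ⟨y, hy⟩ := hNne
  rw [hN] at hy
  have hdb : d ⬝ᵥ b = 0 := by rw [← hy]; exact hkey y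
  -- the function t ↦ inner d (x t) has zero derivative on Ici 0
  have hderiv : ∀ s : ℝ, 0 ≤ s →
      HasDerivWithinAt (fun t => (inner ℝ d (x t) : ℝ)) 0 (Set.Ici (0 : ℝ)) s := by
    intro s hs
    have h1 := (innerSL ℝ d).hasFDerivAt.comp_hasDerivWithinAt s (hode s hs)
    have h2 : (innerSL ℝ d) (WithLp.toLp 2 (A *ᵥ x s - b)) = 0 := by
      have : (inner ℝ d (WithLp.toLp 2 (A *ᵥ x s - b) : EuclideanSpace ℝ (Fin K)) : ℝ) = 0 := by
        rw [hinner]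
        have : (WithLp.toLp 2 (A *ᵥ x s - b) : EuclideanSpace ℝ (Fin K)).ofLp = (A *ᵥ x s) - b := rfl
        rw [this, dotProduct_sub, hkey, hdb, sub_zero]
      simpa [innerSL_apply_apply] using this
    rw [h2] at h1
    exact h1
  -- hence constant on Ici 0
  have hconst : (inner ℝ d (x t) : ℝ) = (inner ℝ d (x 0) : ℝ) := by
    have hcv : Convex ℝ (Set.Ici (0 : ℝ)) := convex_Ici 0
    have hdiff : DifferentiableOn ℝ (fun t => (inner ℝ d (x t) : ℝ)) (Set.Ici 0) :=
      fun s hs => ((hderiv s hs).differentiableWithinAt)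
    have hfd : ∀ s ∈ Set.Ici (0 : ℝ),
        fderivWithin ℝ (fun t => (inner ℝ d (x t) : ℝ)) (Set.Ici 0) s = 0 := by
      intro s hs
      rw [(hderiv s hs).hasFDerivWithinAt.fderivWithin (uniqueDiffOn_Ici 0 s hs)]
      ext
      simp
    exact hcv.is_const_of_fderivWithin_eq_zero hdiff hfd ht Set.self_mem_Ici
  -- orthogonality of x 0 - xstar to d
  have horth : (inner ℝ d (x 0 - xstar) : ℝ) = 0 := by
    by_cases hd0 : d = 0
    · simp [hd0]
    · set c : ℝ := inner ℝ d (x 0 - xstar) with hc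
      have hmem : ∀ s : ℝ, xstar + s • d ∈ N := by
        intro s
        rw [hN] at hstar ⊢
        show A *ᵥ (xstar + s • d).ofLp = b
        rw [WithLp.ofLp_add, WithLp.ofLp_smul, Matrix.mulVec_add, Matrix.mulVec_smul, hd, smul_zero, add_zero]
        exact hstar
      have hineq : ∀ s : ℝ, ‖x 0 - xstar‖ ^ 2 ≤ ‖x 0 - (xstar + s • d)‖ ^ 2 := by
        intro s
        have h1 := hclosest _ (hmem s)
        rw [dist_eq_norm, dist_eq_norm] at h1
        exact pow_le_pow_left₀ (norm_nonneg _) h1 2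
      have hexp : ∀ s : ℝ, ‖x 0 - (xstar + s • d)‖ ^ 2
          = ‖x 0 - xstar‖ ^ 2 - 2 * s * c + s ^ 2 * ‖d‖ ^ 2 := by
        intro s
        have : x 0 - (xstar + s • d) = (x 0 - xstar) - s • d := by abel
        rw [this, norm_sub_sq_real, real_inner_smul_right, norm_smul, real_inner_comm]
        simp [hc, mul_pow]
        ring
      have hle : ∀ s : ℝ, 2 * s * c ≤ s ^ 2 * ‖d‖ ^ 2 := by
        intro s
        have := hineq s
        rw [hexp s] at this
        linarith
      have hdn : (0 : ℝ) < ‖d‖ ^ 2 := by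
        have : ‖d‖ ≠ 0 := norm_ne_zero_iff.mpr hd0
        positivity
      have := hle (c / ‖d‖ ^ 2)
      have h2 : 2 * (c / ‖d‖ ^ 2) * c = 2 * c ^ 2 / ‖d‖ ^ 2 := by ring
      have h3 : (c / ‖d‖ ^ 2) ^ 2 * ‖d‖ ^ 2 = c ^ 2 / ‖d‖ ^ 2 := by
        field_simp
      rw [h2, h3] at this
      have hc2 : c ^ 2 ≤ 0 := by
        have := (div_le_div_iff₀ hdn hdn).mp this
        nlinarith
      have : c = 0 := by nlinarith [sq_nonneg c]
      exact this
  rw [inner_sub_right] at horth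
  rw [hconst]
  linarith
end

section
/- Let A ∈ ℝ^{K×K} satisfy A = −Aᵀ, let b ∈ ℝ^K, and suppose the affine set N = {x ∈ ℝ^K : A x = b} is nonempty. Let x : [0,∞) → ℝ^K be differentiable with x'(t) = A x(t) − b for all t ≥ 0, and let x* be the unique point of N closest (in Euclidean norm) to x(0). Then the time-average x̄(t) = (1/t)∫₀ᵗ x(s) ds converges to x*, i.e., lim_{t→∞} x̄(t) = x*. -/
open Matrix RealInnerProductSpace

noncomputable def mulVecCLM {K : ℕ} (A : Matrix (Fin K) (Fin K) ℝ) :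
    EuclideanSpace ℝ (Fin K) →L[ℝ] EuclideanSpace ℝ (Fin K) :=
  LinearMap.toContinuousLinearMap
    (Matrix.toEuclideanLin A)

lemma mulVecCLM_apply {K : ℕ} (A : Matrix (Fin K) (Fin K) ℝ) (v : EuclideanSpace ℝ (Fin K)) :
    mulVecCLM A v = WithLp.toLp 2 (A *ᵥ v) := rfl

lemma inner_mulVec {K : ℕ} (A : Matrix (Fin K) (Fin K) ℝ) (u v : EuclideanSpace ℝ (Fin K)) :
    ⟪mulVecCLM A u, v⟫ = ⟪u, mulVecCLM Aᵀ v⟫ := by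
  simp only [mulVecCLM_apply, PiLp.inner_apply, RCLike.inner_apply, conj_trivial, PiLp.toLp_apply,
    Matrix.mulVec, dotProduct, Matrix.transpose_apply, Finset.sum_mul, Finset.mul_sum]
  rw [Finset.sum_comm]
  apply Finset.sum_congr rfl; intro i _; apply Finset.sum_congr rfl; intro j _; ring

/-- Even when the Nash equilibrium is not unique, the time-average of continuous-time
gradient descent converges to the unique Nash equilibrium nearest the initial profile:
if `A = -Aᵀ`, the affine set `N = {x : A x = b}` of Nash equilibria is nonempty, `x`
follows `x'(t) = A x(t) - b` on `[0,∞)`, and `x*` is the point of `N` closest (in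
Euclidean norm) to `x(0)`, then `x̄(t) = (1/t) ∫₀ᵗ x(s) ds → x*` as `t → ∞`. -/
theorem stmt16 (K : ℕ) (A : Matrix (Fin K) (Fin K) ℝ) (hA : A = -Aᵀ)
    (b : Fin K → ℝ)
    (N : Set (EuclideanSpace ℝ (Fin K))) (hN : N = {y : EuclideanSpace ℝ (Fin K) | A *ᵥ y = b})
    (hNne : N.Nonempty)
    (x : ℝ → EuclideanSpace ℝ (Fin K))
    (hode : ∀ t : ℝ, 0 ≤ t →
      HasDerivWithinAt x (WithLp.toLp 2 (A *ᵥ (x t) - b)) (Set.Ici (0 : ℝ)) t)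
    (xstar : EuclideanSpace ℝ (Fin K)) (hstar : xstar ∈ N)
    (hclosest : ∀ y ∈ N, dist (x 0) xstar ≤ dist (x 0) y) :
    Filter.Tendsto (fun t : ℝ => (1 / t) • ∫ s in (0 : ℝ)..t, x s)
      Filter.atTop (nhds xstar) := by
  classical
  let E := EuclideanSpace ℝ (Fin K)
  set L := mulVecCLM A with hLdef
  have hAs : (A *ᵥ xstar : Fin K → ℝ) = b := by rw [hN] at hstar; exact hstar
  have hskew : ∀ u v : E, ⟪L u, v⟫ = -⟪u, L v⟫ := by
    intro u v
    rw [hLdef, inner_mulVec]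
    have hT : Aᵀ = -A := by conv_lhs => rw [hA, Matrix.transpose_neg, Matrix.transpose_transpose]
    rw [hT]
    rw [show mulVecCLM (-A) v = -(mulVecCLM A v) by
      simp only [mulVecCLM_apply]
      rw [Matrix.neg_mulVec, WithLp.toLp_neg]]
    rw [inner_neg_right]
  have hskew0 : ∀ u : E, ⟪L u, u⟫ = 0 := by
    intro u
    have h1 := hskew u u
    have h2 : ⟪u, L u⟫ = ⟪L u, u⟫ := real_inner_comm _ _
    rw [h2] at h1; linarith
  -- the shifted trajectory
  set y : ℝ → E := fun t => x t - xstar with hydef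
  have hyderiv : ∀ t : ℝ, 0 ≤ t → HasDerivWithinAt y (L (y t)) (Set.Ici (0 : ℝ)) t := by
    intro t ht
    have h := (hode t ht).sub_const xstar
    have hkey : L (y t) = WithLp.toLp 2 (A *ᵥ (x t) - b) := by
      show L (x t - xstar) = _
      rw [map_sub, hLdef, mulVecCLM_apply, mulVecCLM_apply]
      rw [hAs, WithLp.toLp_sub]
    rw [hkey]
    exact h
  have hycont : ContinuousOn y (Set.Ici (0 : ℝ)) :=
    fun s hs => (hyderiv s hs).continuousWithinAt
  -- norm of y is constant
  have hnormsq : ∀ t : ℝ, 0 ≤ t → ⟪y t, y t⟫ = ⟪y 0, y 0⟫ := by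
    intro t ht
    have hc : ContinuousOn (fun s => ⟪y s, y s⟫) (Set.Icc (0 : ℝ) t) :=
      ((hycont.mono Set.Icc_subset_Ici_self).inner (hycont.mono Set.Icc_subset_Ici_self))
    have hd : ∀ s ∈ Set.Ico (0 : ℝ) t,
        HasDerivWithinAt (fun s => ⟪y s, y s⟫) 0 (Set.Ici s) s := by
      intro s hs
      have h := ((hyderiv s hs.1).mono (Set.Ici_subset_Ici.2 hs.1)).inner ℝ
        ((hyderiv s hs.1).mono (Set.Ici_subset_Ici.2 hs.1))
      have h0 : ⟪y s, L (y s)⟫ + ⟪L (y s), y s⟫ = 0 := by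
        have e1 := hskew0 (y s)
        have e2 : ⟪y s, L (y s)⟫ = ⟪L (y s), y s⟫ := real_inner_comm _ _
        linarith
      rwa [h0] at h
    exact constant_of_has_deriv_right_zero hc hd t ⟨ht, le_rfl⟩
  -- kernel components of y are constant
  have hkerconst : ∀ v : E, L v = 0 → ∀ t : ℝ, 0 ≤ t → ⟪y t, v⟫ = ⟪y 0, v⟫ := by
    intro v hv t ht
    have hc : ContinuousOn (fun s => ⟪y s, v⟫) (Set.Icc (0 : ℝ) t) :=
      ((hycont.mono Set.Icc_subset_Ici_self).inner continuousOn_const)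
    have hd : ∀ s ∈ Set.Ico (0 : ℝ) t,
        HasDerivWithinAt (fun s => ⟪y s, v⟫) 0 (Set.Ici s) s := by
      intro s hs
      have h := ((hyderiv s hs.1).mono (Set.Ici_subset_Ici.2 hs.1)).inner ℝ
        (hasDerivWithinAt_const s _ v)
      have h0 : ⟪y s, (0 : E)⟫ + ⟪L (y s), v⟫ = 0 := by
        rw [inner_zero_right, hskew (y s) v, hv, inner_zero_right]
        ring
      rwa [h0] at h
    exact constant_of_has_deriv_right_zero hc hd t ⟨ht, le_rfl⟩
  -- y 0 is orthogonal to ker L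
  have horth : ∀ v : E, L v = 0 → ⟪y 0, v⟫ = 0 := by
    intro v hv
    rcases eq_or_ne v 0 with rfl | hvne
    · exact inner_zero_right _
    have hn : (0:ℝ) < ‖v‖ ^ 2 := pow_pos (norm_pos_iff.2 hvne) 2
    set c : ℝ := ⟪y 0, v⟫ / ‖v‖ ^ 2 with hcdef
    have hmem : xstar + c • v ∈ N := by
      rw [hN]
      show (A *ᵥ (xstar + c • v) : Fin K → ℝ) = b
      have h5 : L (xstar + c • v) = b := by
        rw [map_add, L.map_smul, hv, smul_zero, add_zero]
        exact hAs
      exact h5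
    have h1 : ‖y 0‖ ≤ ‖y 0 - c • v‖ := by
      have h6 := hclosest _ hmem
      rw [dist_eq_norm, dist_eq_norm] at h6
      have he : x 0 - (xstar + c • v) = y 0 - c • v := by
        rw [hydef]; show x 0 - (xstar + c • v) = (x 0 - xstar) - c • v; abel
      rwa [he] at h6
    have h2 : ‖y 0‖ ^ 2 ≤ ‖y 0 - c • v‖ ^ 2 := pow_le_pow_left₀ (norm_nonneg _) h1 2
    have h3 : ‖y 0 - c • v‖ ^ 2 = ‖y 0‖ ^ 2 - 2 * (c * ⟪y 0, v⟫) + c ^ 2 * ‖v‖ ^ 2 := by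
      rw [norm_sub_sq_real, real_inner_smul_right, norm_smul]
      rw [mul_pow]
      simp [sq_abs]
    have hcn : c * ‖v‖ ^ 2 = ⟪y 0, v⟫ := div_mul_cancel₀ _ (ne_of_gt hn)
    have h4 : (0:ℝ) ≤ (-(2:ℝ) * (c * ⟪y 0, v⟫) + c ^ 2 * ‖v‖ ^ 2) * ‖v‖ ^ 2 := by
      apply mul_nonneg _ hn.le
      linarith
    have hsq : ⟪y 0, v⟫ ^ 2 ≤ 0 := by nlinarith [h4, hcn]
    have h7 := le_antisymm hsq (sq_nonneg _)
    exact pow_eq_zero_iff two_ne_zero |>.1 h7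
  -- integrability
  have hyint : ∀ t : ℝ, 0 ≤ t → IntervalIntegrable y MeasureTheory.volume 0 t := by
    intro t ht
    exact ContinuousOn.intervalIntegrable_of_Icc ht (hycont.mono Set.Icc_subset_Ici_self)
  set z : ℝ → E := fun t => ∫ s in (0:ℝ)..t, y s with hzdef
  -- fundamental theorem of calculus applied to L
  have hLz : ∀ t : ℝ, 0 ≤ t → L (z t) = y t - y 0 := by
    intro t ht
    have hint : IntervalIntegrable (fun s => L (y s)) MeasureTheory.volume 0 t :=
      ContinuousOn.intervalIntegrable_of_Icc ht
        (L.continuous.comp_continuousOn (hycont.mono Set.Icc_subset_Ici_self))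
    have h11 : (∫ s in (0:ℝ)..t, L (y s)) = L (z t) :=
      L.intervalIntegral_comp_comm (hyint t ht)
    rw [← h11]
    exact intervalIntegral.integral_eq_sub_of_hasDeriv_right_of_le ht
      (hycont.mono Set.Icc_subset_Ici_self)
      (fun s hs => (hyderiv s hs.1.le).mono fun u hu => le_trans hs.1.le (le_of_lt hu)) hint
  -- norm bound on y
  have hnorm : ∀ t : ℝ, 0 ≤ t → ‖y t‖ ≤ ‖y 0‖ := by
    intro t ht
    have h12 := hnormsq t ht
    rw [real_inner_self_eq_norm_sq, real_inner_self_eq_norm_sq] at h12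
    nlinarith [norm_nonneg (y t), norm_nonneg (y 0)]
  -- the orthogonal complement of the kernel
  set S : Submodule ℝ E := (LinearMap.ker (L : E →ₗ[ℝ] E))ᗮ with hSdef
  have hzS : ∀ t : ℝ, 0 ≤ t → z t ∈ S := by
    intro t ht
    rw [hSdef, Submodule.mem_orthogonal]
    intro u hu
    have hu' : L u = 0 := hu
    have h13 : (innerSL ℝ u) (z t) = ∫ s in (0:ℝ)..t, (innerSL ℝ u) (y s) :=
      ((innerSL ℝ u).intervalIntegral_comp_comm (hyint t ht)).symm
    have h14 : ∀ s ∈ Set.uIcc (0:ℝ) t, (innerSL ℝ u) (y s) = (0:ℝ) := by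
      intro s hs
      rw [Set.uIcc_of_le ht] at hs
      have : ⟪u, y s⟫ = ⟪y s, u⟫ := real_inner_comm _ _
      show ⟪u, y s⟫ = 0
      rw [this, hkerconst u hu' s hs.1]
      exact horth u hu'
    show ⟪u, z t⟫ = 0
    calc ⟪u, z t⟫ = ∫ s in (0:ℝ)..t, (innerSL ℝ u) (y s) := h13
      _ = ∫ _ in (0:ℝ)..t, (0:ℝ) := intervalIntegral.integral_congr h14
      _ = 0 := by simp
  -- antilipschitz bound on the orthogonal complement
  set f : S →ₗ[ℝ] E := (L : E →ₗ[ℝ] E).comp S.subtype with hfdef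
  have hfker : LinearMap.ker f = ⊥ := by
    rw [LinearMap.ker_eq_bot']
    rintro ⟨w, hwS⟩ hw
    have hw0 : L w = 0 := hw
    have h15 : ⟪w, w⟫ = 0 := (Submodule.mem_orthogonal _ _).1 hwS w hw0
    have : w = 0 := inner_self_eq_zero.1 h15
    exact Subtype.ext this
  obtain ⟨C, hC0, hC⟩ := f.exists_antilipschitzWith hfker
  have hbd : ∀ w : S, ‖(w : E)‖ ≤ (C : ℝ) * ‖L (w : E)‖ := by
    intro w
    have h16 := hC.le_mul_dist w 0
    rw [dist_eq_norm, dist_eq_norm, sub_zero, map_zero, sub_zero] at h16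
    exact h16
  set M : ℝ := (C : ℝ) * (2 * ‖y 0‖) with hMdef
  have hzbound : ∀ t : ℝ, 0 ≤ t → ‖z t‖ ≤ M := by
    intro t ht
    have h17 := hbd ⟨z t, hzS t ht⟩
    have h18 : ‖L (z t)‖ ≤ 2 * ‖y 0‖ := by
      rw [hLz t ht]
      calc ‖y t - y 0‖ ≤ ‖y t‖ + ‖y 0‖ := norm_sub_le _ _
        _ ≤ 2 * ‖y 0‖ := by have := hnorm t ht; linarith
    calc ‖z t‖ ≤ (C : ℝ) * ‖L (z t)‖ := h17
      _ ≤ M := by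
          rw [hMdef]
          exact mul_le_mul_of_nonneg_left h18 C.coe_nonneg
  -- decomposition of the time average
  have hsplit : ∀ t : ℝ, 0 < t →
      (1 / t) • ∫ s in (0:ℝ)..t, x s = xstar + (1 / t) • z t := by
    intro t ht
    have hx_eq : Set.EqOn x (fun s => y s + xstar) (Set.uIcc (0:ℝ) t) := by
      intro s _
      show x s = (x s - xstar) + xstar
      abel
    have h10 : (∫ s in (0:ℝ)..t, x s) = z t + (t - 0) • xstar := by
      rw [intervalIntegral.integral_congr hx_eq,
        intervalIntegral.integral_add (hyint t ht.le) intervalIntegrable_const,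
        intervalIntegral.integral_const]
    rw [h10, smul_add, sub_zero, smul_smul, one_div, inv_mul_cancel₀ (ne_of_gt ht), one_smul,
      add_comm]
  -- the averaged fluctuation tends to zero
  have hz0 : Filter.Tendsto (fun t : ℝ => (1 / t) • z t) Filter.atTop (nhds (0 : E)) := by
    apply squeeze_zero_norm' (a := fun t : ℝ => M * t⁻¹)
    · filter_upwards [Filter.eventually_ge_atTop (1:ℝ)] with t ht
      have ht0 : (0:ℝ) < t := lt_of_lt_of_le one_pos ht
      rw [norm_smul]
      have : ‖(1:ℝ) / t‖ = t⁻¹ := by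
        rw [Real.norm_eq_abs, abs_of_pos (by positivity), one_div]
      rw [this, mul_comm]
      exact mul_le_mul_of_nonneg_right (hzbound t ht0.le) (by positivity)
    · have := tendsto_inv_atTop_zero.const_mul M
      simpa using this
  -- conclusion
  have hfin : Filter.Tendsto (fun t : ℝ => xstar + (1 / t) • z t) Filter.atTop (nhds xstar) := by
    have := hz0.const_add xstar
    simpa using this
  refine Filter.Tendsto.congr' ?_ hfin
  filter_upwards [Filter.eventually_gt_atTop (0:ℝ)] with t ht
  exact (hsplit t ht).symm
end
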